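/- arXiv:2510.02883 — 4 statements merged into one kernel-verified Lean document; each statement's English description precedes it below -/
import Mathlib

section
/- Lemma (existence of good codebooks). For every finite alphabet 𝒳 and every real R > 0 there exist a constant C > 0 and N ∈ ℕ such that for every n ≥ N and every type P of denominator n with R < H(P), there exists a set M ⊆ T_P with exp(nR − C·|𝒳|²·log(n+1)) ≤ |M| ≤ exp(nR), such that for every x ∈ M and every conditional type V ∈ 𝒱(x,𝒳): |T_V(x) ∩ (M \ {x})| ≤ |T_V(x)|·e^{−n(H(P)−R)}. -/
/-!
Random coding with expurgation. Let `T` be the type class of `P`, so `|T| ≥ e^{nH(P)}/(n+1)^{|𝒳|}`,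
and put `B = e^{-n(H(P)-R)}`. Charge each ordered pair `(x, y)` of strings with `1/(|T_V(x)| B)`,
`V` the conditional type of `y` given `x`; as there are at most `(n+1)^{|𝒳|²}` joint types, the
total charge leaving any `x` is at most `(n+1)^{|𝒳|²}/B`. Averaging over the `m`-subsets of `T`,
`m ≈ e^{nR}/(n+1)^{|𝒳|²+|𝒳|}`, some subset carries total charge at most `m/2`, so (Markov) at most
half of its points send out a charge `≥ 1`. Discarding them leaves a code in which
`|T_V(x) ∩ M∖{x}| < |T_V(x)| B` for every codeword `x` and every `V`.
-/

open scoped BigOperators Matrix ComplexOrder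

attribute [local instance] Classical.propDecidable

noncomputable section

namespace Paper

/-- Action of a permutation on strings: `(s • x) i = x (s⁻¹ i)`. -/
def permSmul {X : Type*} {n : ℕ} (s : Equiv.Perm (Fin n)) (x : Fin n → X) : Fin n → X :=
  fun i => x (s⁻¹ i)

lemma permSmul_one {X : Type*} {n : ℕ} (x : Fin n → X) : permSmul 1 x = x := rfl

lemma permSmul_mul {X : Type*} {n : ℕ} (s t : Equiv.Perm (Fin n)) (x : Fin n → X) :
    permSmul (s * t) x = permSmul s (permSmul t x) := by
  funext i
  simp [permSmul, mul_inv_rev, Equiv.Perm.mul_apply]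

/-- Stabilizer subgroup `S_x` of a string `x`. -/
def permStab {X : Type*} {n : ℕ} (x : Fin n → X) : Subgroup (Equiv.Perm (Fin n)) where
  carrier := {s | permSmul s x = x}
  one_mem' := permSmul_one x
  mul_mem' := by
    intro a b ha hb
    show permSmul (a * b) x = x
    rw [permSmul_mul, show permSmul b x = x from hb, show permSmul a x = x from ha]
  inv_mem' := by
    intro a ha
    show permSmul a⁻¹ x = x
    have h : permSmul a⁻¹ (permSmul a x) = x := by
      rw [← permSmul_mul, inv_mul_cancel, permSmul_one]
    rwa [show permSmul a x = x from ha] at h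

/-- Stabilizer of `x` as a finset of permutations. -/
def stabFinset {X : Type*} [DecidableEq X] {n : ℕ} (x : Fin n → X) :
    Finset (Equiv.Perm (Fin n)) :=
  Finset.univ.filter (fun s => permSmul s x = x)

/-- Empirical distribution (type) of a string. -/
def empDist {X : Type*} [Fintype X] [DecidableEq X] {n : ℕ} (x : Fin n → X) (a : X) : ℝ :=
  (Finset.univ.filter (fun i => x i = a)).card / n

/-- `P` is a type of denominator `n`. -/
def IsType {X : Type*} [Fintype X] [DecidableEq X] (n : ℕ) (P : X → ℝ) : Prop :=
  ∃ x : Fin n → X, empDist x = P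

/-- The type class `T_P`. -/
def typeClass {X : Type*} [Fintype X] [DecidableEq X] (n : ℕ) (P : X → ℝ) :
    Finset (Fin n → X) :=
  Finset.univ.filter (fun x => empDist x = P)

/-- Shannon entropy (natural logarithm). -/
def entropy {X : Type*} [Fintype X] (P : X → ℝ) : ℝ :=
  -∑ a, P a * Real.log (P a)

/-- Joint type of a pair of strings. -/
def jointDist {X : Type*} [Fintype X] [DecidableEq X] {n : ℕ} (x y : Fin n → X) (a b : X) : ℝ :=
  (Finset.univ.filter (fun i => x i = a ∧ y i = b)).card / n

/-- The set `𝒱(x,𝒳)` of conditional types given `x` (with output alphabet `𝒳`),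
`V a b` standing for `V(b|a)`. -/
def condTypeSet {X : Type*} [Fintype X] [DecidableEq X] {n : ℕ} (x : Fin n → X) :
    Set (X → X → ℝ) :=
  {V | ∃ y : Fin n → X, ∀ a b, V a b * empDist x a = jointDist x y a b}

/-- `T_V(x)` : strings whose conditional type given `x` is `V`. -/
def condTypeClass {X : Type*} [Fintype X] [DecidableEq X] {n : ℕ} (x : Fin n → X)
    (V : X → X → ℝ) : Finset (Fin n → X) :=
  Finset.univ.filter (fun y => ∀ a b, V a b * empDist x a = jointDist x y a b)

/-- Tensor power `W^{⊗n}(x)` of a c-q channel along a string `x`. -/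
def cqPow {X : Type*} {n d : ℕ} (W : X → Matrix (Fin d) (Fin d) ℂ) (x : Fin n → X) :
    Matrix (Fin n → Fin d) (Fin n → Fin d) ℂ :=
  Matrix.of fun i j => ∏ k, W (x k) (i k) (j k)

/-- `n`-fold tensor power `σ^{⊗n}` of a `d × d` matrix. -/
def tensPow (n : ℕ) {d : ℕ} (σ : Matrix (Fin d) (Fin d) ℂ) :
    Matrix (Fin n → Fin d) (Fin n → Fin d) ℂ :=
  Matrix.of fun i j => ∏ k, σ (i k) (j k)

/-- Real power of a Hermitian matrix via the functional calculus, with the convention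
`0 ^ r = 0` for `r ≠ 0` (so negative powers are taken on the support);
junk value `0` on non-Hermitian input. -/
def hermPow {m : Type*} [Fintype m] [DecidableEq m] (A : Matrix m m ℂ) (r : ℝ) :
    Matrix m m ℂ :=
  if hA : A.IsHermitian then
    (hA.eigenvectorUnitary : Matrix m m ℂ) *
      Matrix.diagonal (fun i => ((hA.eigenvalues i ^ r : ℝ) : ℂ)) *
      (star (hA.eigenvectorUnitary : Matrix m m ℂ))
  else 0

/-- Schatten `p`-norm of a (square complex) matrix. -/
def schattenNorm {m : Type*} [Fintype m] [DecidableEq m] (p : ℝ) (A : Matrix m m ℂ) : ℝ :=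
  (∑ i, (Matrix.isHermitian_conjTranspose_mul_self A).eigenvalues i ^ (p / 2)) ^ (1 / p)

/-- `ℓ² → ℓ²` operator norm of a matrix. -/
def l2opNorm {m : Type*} [Fintype m] [DecidableEq m] (A : Matrix m m ℂ) : ℝ :=
  ‖LinearMap.toContinuousLinearMap (Matrix.toEuclideanLin A)‖

/-- Permutation matrix of the action of `g : G` on a finite `G`-set `β`. -/
def actMatrix (G : Type*) [Group G] (β : Type*) [MulAction G β] [Fintype β] [DecidableEq β]
    (g : G) : Matrix β β ℂ :=
  Matrix.of fun u v => if g • v = u then 1 else 0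

/-- Transition matrix `T_S` of the (Schreier) graph of a multiset `S` acting on `β`. -/
def transMatrix (G : Type*) [Group G] (β : Type*) [MulAction G β] [Fintype β] [DecidableEq β]
    (S : Multiset G) : Matrix β β ℂ :=
  ((S.card : ℂ))⁻¹ • (S.map (fun s => actMatrix G β s)).sum

/-- The matrix `P₁ = (1/|G|) Σ_g Π(g)`. -/
def avgMatrix (G : Type*) [Group G] [Fintype G] (β : Type*) [MulAction G β] [Fintype β]
    [DecidableEq β] : Matrix β β ℂ :=
  ((Fintype.card G : ℂ))⁻¹ • ∑ g : G, actMatrix G β g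

/-- Sandwiched Rényi divergence (finite part). -/
def sandwichedRenyi {m : Type*} [Fintype m] [DecidableEq m] (α : ℝ) (ρ σ : Matrix m m ℂ) : ℝ :=
  (α / (α - 1)) *
    Real.log (schattenNorm α (hermPow σ ((1 - α) / (2 * α)) * ρ * hermPow σ ((1 - α) / (2 * α))))

/-- Sandwiched `α`-Augustin information `Ĭ_α(X:B)_{W^P}`: the infimum over density matrices `σ`
whose support contains the support of every `W x` with `P x ≠ 0` (the divergence being `+∞`
for other `σ`). -/
def augustin {X : Type*} [Fintype X] {d : ℕ} (α : ℝ) (P : X → ℝ)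
    (W : X → Matrix (Fin d) (Fin d) ℂ) : ℝ :=
  ⨅ σ : {σ : Matrix (Fin d) (Fin d) ℂ // σ.PosSemidef ∧ σ.trace = 1 ∧
      ∀ x : X, P x ≠ 0 → ∀ v : Fin d → ℂ, σ.mulVec v = 0 → (W x).mulVec v = 0},
    ∑ x, P x * sandwichedRenyi α (W x) σ.1

/-- Sibson `α`-mutual information `I_α(X:B)_{W^P}`. -/
def sibson {X : Type*} [Fintype X] {d : ℕ} (α : ℝ) (P : X → ℝ)
    (W : X → Matrix (Fin d) (Fin d) ℂ) : ℝ :=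
  (α / (α - 1)) *
    Real.log ((hermPow (∑ x, (P x : ℂ) • hermPow (W x) α) (1 / α)).trace.re)

/-- Witness data for a `(P,R,δ)`-radical spectral expander codebook, relative to the
nondecreasing representative `xP` of the type class. -/
def ExpanderWitness {X : Type*} {n : ℕ} (R δ : ℝ) (xP : Fin n → X)
    (S' : Multiset (Equiv.Perm (Fin n))) (M : Multiset (Fin n → X)) : Prop :=
  S'.map (fun s => s⁻¹) = S' ∧
  M = S'.map (fun s => permSmul s xP) ∧
  (S'.card : ℝ) = Real.exp (n * R + δ) ∧
  l2opNorm (transMatrix (Equiv.Perm (Fin n)) (Equiv.Perm (Fin n) ⧸ permStab xP) S' -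
      avgMatrix (Equiv.Perm (Fin n)) (Equiv.Perm (Fin n) ⧸ permStab xP)) ≤
    Real.exp (-(n * R) / 2)

/-- `(P,R,δ)`-radical spectral expander codebook. -/
def IsRadicalExpander {X : Type*} {n : ℕ} (R δ : ℝ) (xP : Fin n → X)
    (M : Multiset (Fin n → X)) : Prop :=
  ∃ S' : Multiset (Equiv.Perm (Fin n)), ExpanderWitness R δ xP S' M

/-- Permuting unitary `V_s` on `(ℂ^d)^{⊗n}`. -/
def permUnitary {n : ℕ} (d : ℕ) (s : Equiv.Perm (Fin n)) :
    Matrix (Fin n → Fin d) (Fin n → Fin d) ℂ :=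
  Matrix.of fun i j => if i = permSmul s j then 1 else 0

/-- Average of the conjugation action over a subgroup `S ≤ S_n` : `E_S(η)`. -/
def avgConj {n : ℕ} {d : ℕ} (S : Subgroup (Equiv.Perm (Fin n)))
    (η : Matrix (Fin n → Fin d) (Fin n → Fin d) ℂ) :
    Matrix (Fin n → Fin d) (Fin n → Fin d) ℂ :=
  ((Nat.card S : ℂ))⁻¹ •
    ∑ s : S, permUnitary d (s : Equiv.Perm (Fin n)) * η *
      (permUnitary d (s : Equiv.Perm (Fin n)))ᴴ

/-- The map `Θ_{S'}`. -/
def theta {X : Type*} {n : ℕ} (d : ℕ) (xP : Fin n → X) (S' : Multiset (Equiv.Perm (Fin n)))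
    (η : Matrix (Fin n → Fin d) (Fin n → Fin d) ℂ) :
    Matrix (Fin n → Fin d) (Fin n → Fin d) ℂ :=
  ((S'.card : ℂ))⁻¹ •
      (S'.map (fun s => permUnitary d s * avgConj (permStab xP) η * (permUnitary d s)ᴴ)).sum -
    avgConj (⊤ : Subgroup (Equiv.Perm (Fin n))) η

/-- Partial trace over the `E` system. -/
def ptraceE {dB dE : ℕ} (M : Matrix (Fin dB × Fin dE) (Fin dB × Fin dE) ℂ) :
    Matrix (Fin dB) (Fin dB) ℂ :=
  Matrix.of fun i j => ∑ k, M (i, k) (j, k)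

/-- Partial trace over the `B` system. -/
def ptraceB {dB dE : ℕ} (M : Matrix (Fin dB × Fin dE) (Fin dB × Fin dE) ℂ) :
    Matrix (Fin dE) (Fin dE) ℂ :=
  Matrix.of fun k l => ∑ i, M (i, k) (i, l)

open Finset

section Fibers

variable {α β : Type*} [Fintype α] [DecidableEq β]

def fiberOf (g : α → β) (y : α) : Finset α := univ.filter (g · = g y)

lemma mem_fiberOf_self (g : α → β) (y : α) : y ∈ fiberOf g y := by simp [fiberOf]

lemma fiberOf_eq_of_mem {g : α → β} {y z : α} (h : z ∈ fiberOf g y) :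
    fiberOf g z = fiberOf g y := by
  simp only [fiberOf, mem_filter, mem_univ, true_and] at h
  simp only [fiberOf, h]

lemma sum_inv_card_fiberOf (g : α → β) :
    ∑ y, ((fiberOf g y).card : ℝ)⁻¹ = (univ.image g).card := by
  rw [card_eq_sum_ones, Nat.cast_sum]
  refine (sum_image' _ fun y _ => ?_).symm
  rw [sum_congr rfl fun z hz => by rw [fiberOf_eq_of_mem hz], sum_const, nsmul_eq_mul,
    Nat.cast_one]
  exact (mul_inv_cancel₀ (Nat.cast_ne_zero (R := ℝ).2
    (card_ne_zero.2 ⟨y, mem_fiberOf_self g y⟩))).symm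

lemma card_inter_div_card_fiberOf_le [DecidableEq α] (g : α → β) (S : Finset α) (y₀ : α) :
    ((fiberOf g y₀ ∩ S).card : ℝ) / (fiberOf g y₀).card ≤ ∑ y ∈ S, ((fiberOf g y).card : ℝ)⁻¹ :=
  calc ((fiberOf g y₀ ∩ S).card : ℝ) / (fiberOf g y₀).card
      = ∑ y ∈ fiberOf g y₀ ∩ S, ((fiberOf g y).card : ℝ)⁻¹ := by
        rw [sum_congr rfl fun y hy => by rw [fiberOf_eq_of_mem (mem_inter.1 hy).1],
          sum_const, nsmul_eq_mul, div_eq_mul_inv]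
    _ ≤ ∑ y ∈ S, ((fiberOf g y).card : ℝ)⁻¹ :=
        sum_le_sum_of_subset_of_nonneg inter_subset_right fun _ _ _ => by positivity

lemma card_image_le_pow {N : ℕ} [Fintype β] (g : α → β → ℕ) (hg : ∀ y b, g y b ≤ N) :
    (univ.image g).card ≤ (N + 1) ^ Fintype.card β := by
  calc (univ.image g).card ≤ (Fintype.piFinset fun _ : β => range (N + 1)).card :=
        card_le_card fun c hc => by
          obtain ⟨y, -, rfl⟩ := mem_image.1 hc
          simpa [Nat.lt_succ_iff] using hg y
    _ = (N + 1) ^ Fintype.card β := by simp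

end Fibers

section TypeClasses

lemma pow_mul_factorial_le_pow_mul_factorial (k l : ℕ) :
    k ^ l * k.factorial ≤ k ^ k * l.factorial := by
  rcases le_total l k with h | h
  · rw [← Nat.factorial_mul_descFactorial (Nat.sub_le k l), Nat.sub_sub_self h]
    calc k ^ l * (l.factorial * k.descFactorial (k - l))
        ≤ k ^ l * (l.factorial * k ^ (k - l)) := by gcongr; exact Nat.descFactorial_le_pow _ _
      _ = k ^ k * l.factorial := by rw [mul_left_comm, ← pow_add, Nat.add_sub_cancel' h, mul_comm]
  · calc k ^ l * k.factorial = k ^ k * (k.factorial * k ^ (l - k)) := by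
          rw [mul_left_comm, ← pow_add, Nat.add_sub_cancel' h, mul_comm k.factorial]
      _ ≤ k ^ k * l.factorial := by gcongr; exact Nat.factorial_mul_pow_sub_le_factorial h

variable {ι X : Type*} [Fintype ι] [DecidableEq X]

def typeCount (x : ι → X) (a : X) : ℕ := (univ.filter fun i => x i = a).card

lemma typeCount_eq_card_subtype (x : ι → X) (a : X) :
    typeCount x a = Fintype.card {i // x i = a} := (Fintype.card_subtype _).symm

lemma typeCount_comp_perm (x : ι → X) (σ : Equiv.Perm ι) : typeCount (x ∘ σ) = typeCount x := by
  funext a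
  simp only [typeCount_eq_card_subtype]
  exact Fintype.card_congr (σ.subtypeEquiv fun _ => Iff.rfl)

lemma exists_perm_of_typeCount_eq {x z : ι → X} (h : typeCount z = typeCount x) :
    ∃ σ : Equiv.Perm ι, x ∘ σ = z :=
  ⟨Equiv.ofFiberEquiv fun a => Fintype.equivOfCardEq (by
      simp only [← typeCount_eq_card_subtype, h]),
    funext (Equiv.ofFiberEquiv_map _)⟩

lemma card_fiberOf_typeCount_mul_prod_factorial [DecidableEq ι] [Fintype X] (x : ι → X) :
    (fiberOf typeCount x).card * ∏ a, (typeCount x a).factorial = (Fintype.card ι).factorial := by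
  -- orbit–stabilizer for `Perm ι` acting on strings by precomposition
  have horbit : ∀ z, z ∈ MulAction.orbit (Equiv.Perm ι)ᵈᵐᵃ x ↔ z ∈ fiberOf typeCount x := by
    intro z
    simp only [fiberOf, mem_filter, mem_univ, true_and]
    constructor
    · rintro ⟨σ, rfl⟩
      exact typeCount_comp_perm x _
    · intro h
      obtain ⟨σ, rfl⟩ := exists_perm_of_typeCount_eq h
      exact ⟨DomMulAct.mk σ, rfl⟩
  have hstab :
      Nat.card (MulAction.stabilizer (Equiv.Perm ι)ᵈᵐᵃ x) = ∏ a, (typeCount x a).factorial := by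
    rw [Nat.card_congr (Equiv.subtypeEquiv (q := fun σ : Equiv.Perm ι => x ∘ σ = x)
      DomMulAct.mk.symm fun _ => DomMulAct.mem_stabilizer_iff),
      Nat.card_eq_fintype_card, DomMulAct.stabilizer_card]
    simp only [typeCount_eq_card_subtype]
  rw [← hstab, ← Nat.card_eq_finsetCard, ← Nat.card_congr (Equiv.subtypeEquivRight horbit),
    Nat.card_coe_set_eq, ← MulAction.index_stabilizer, mul_comm, Subgroup.card_mul_index,
    Nat.card_congr DomMulAct.mk.symm, Nat.card_perm, Nat.card_eq_fintype_card]

lemma sum_typeCount [Fintype X] (x : ι → X) : ∑ a, typeCount x a = Fintype.card ι := by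
  simpa [typeCount] using sum_card_fiberwise_eq_card_filter univ univ x

lemma typeCount_le (x : ι → X) (a : X) : typeCount x a ≤ Fintype.card ι := card_filter_le _ _

lemma prod_comp_eq_prod_pow_typeCount [Fintype X] {M : Type*} [CommMonoid M] (p : X → M)
    (x : ι → X) : ∏ i, p (x i) = ∏ a, p a ^ typeCount x a := by
  rw [← prod_fiberwise' univ x p]
  simp [typeCount]

lemma card_fiberOf_typeCount_mul_prod_pow_le [DecidableEq ι] [Fintype X] (x₀ x : ι → X) :
    (fiberOf typeCount x).card * ∏ a, typeCount x₀ a ^ typeCount x a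
      ≤ (fiberOf typeCount x₀).card * ∏ a, typeCount x₀ a ^ typeCount x₀ a := by
  refine Nat.le_of_mul_le_mul_right (c := (∏ a, (typeCount x a).factorial) *
    ∏ a, (typeCount x₀ a).factorial) ?_ (by positivity)
  calc _ = (Fintype.card ι).factorial *
        ∏ a, (typeCount x₀ a ^ typeCount x a * (typeCount x₀ a).factorial) := by
          rw [← card_fiberOf_typeCount_mul_prod_factorial x, prod_mul_distrib]; ring
    _ ≤ (Fintype.card ι).factorial *
        ∏ a, (typeCount x₀ a ^ typeCount x₀ a * (typeCount x a).factorial) := by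
          exact Nat.mul_le_mul_left _
            (prod_le_prod' fun a _ => pow_mul_factorial_le_pow_mul_factorial _ _)
    _ = _ := by rw [← card_fiberOf_typeCount_mul_prod_factorial x₀, prod_mul_distrib]; ring

def typeFreq (x : ι → X) (a : X) : ℝ := typeCount x a / Fintype.card ι

-- No type class is more likely than that of `x₀` under the i.i.d. law of `typeFreq x₀`.
lemma card_fiberOf_mul_prod_typeFreq_pow_le [DecidableEq ι] [Fintype X] (x₀ x : ι → X) :
    (fiberOf typeCount x).card * ∏ a, typeFreq x₀ a ^ typeCount x a
      ≤ (fiberOf typeCount x₀).card * ∏ a, typeFreq x₀ a ^ typeCount x₀ a := by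
  have hpow : ∀ y : ι → X, ∏ a, typeFreq x₀ a ^ typeCount y a
      = (∏ a, (typeCount x₀ a : ℝ) ^ typeCount y a) / (Fintype.card ι : ℝ) ^ Fintype.card ι := by
    intro y
    simp only [typeFreq, div_pow, prod_div_distrib, prod_pow_eq_pow_sum, sum_typeCount]
  rw [hpow, hpow, ← mul_div_assoc, ← mul_div_assoc]
  refine div_le_div_of_nonneg_right ?_ (by positivity)
  exact_mod_cast card_fiberOf_typeCount_mul_prod_pow_le x₀ x

lemma exp_neg_mul_entropy_typeFreq [Fintype X] (x : ι → X) :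
    Real.exp (-(Fintype.card ι * entropy (typeFreq x))) = ∏ a, typeFreq x a ^ typeCount x a := by
  rw [entropy, mul_neg, neg_neg, mul_sum, Real.exp_sum]
  refine prod_congr rfl fun a _ => ?_
  rcases Nat.eq_zero_or_pos (typeCount x a) with h | h
  · simp [typeFreq, h]
  · have hn : 0 < Fintype.card ι := h.trans_le (typeCount_le x a)
    have hq : 0 < typeFreq x a := div_pos (by exact_mod_cast h) (by exact_mod_cast hn)
    have hc : (Fintype.card ι : ℝ) * typeFreq x a = typeCount x a := by
      unfold typeFreq; field_simp
    rw [← mul_assoc, hc, Real.exp_nat_mul, Real.exp_log hq]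

theorem exp_mul_entropy_le_card_fiberOf [DecidableEq ι] [Fintype X] [Nonempty ι] (x₀ : ι → X) :
    Real.exp (Fintype.card ι * entropy (typeFreq x₀))
      ≤ ((Fintype.card ι : ℝ) + 1) ^ Fintype.card X * (fiberOf typeCount x₀).card := by
  set n := Fintype.card ι
  have hsum : ∑ a, typeFreq x₀ a = 1 := by
    simp only [typeFreq, ← sum_div, ← Nat.cast_sum, sum_typeCount]
    exact div_self (by positivity)
  have hcard : ∀ x : ι → X, ((fiberOf typeCount x).card : ℝ) ≠ 0 := fun x =>
    Nat.cast_ne_zero.2 (card_ne_zero.2 ⟨x, mem_fiberOf_self _ x⟩)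
  have htypes :
      ((univ.image (typeCount : (ι → X) → X → ℕ)).card : ℝ) ≤ (n + 1) ^ Fintype.card X := by
    exact_mod_cast card_image_le_pow _ typeCount_le
  have hone : 1 ≤ (n + 1) ^ Fintype.card X *
      ((fiberOf typeCount x₀).card * Real.exp (-(n * entropy (typeFreq x₀)))) :=
    calc (1 : ℝ) = ∑ x : ι → X, ∏ a, typeFreq x₀ a ^ typeCount x a := by
          simp_rw [← prod_comp_eq_prod_pow_typeCount, ← Fintype.prod_sum, hsum, prod_const_one]
      _ = ∑ x : ι → X, ((fiberOf typeCount x).card : ℝ)⁻¹ *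
            ((fiberOf typeCount x).card * ∏ a, typeFreq x₀ a ^ typeCount x a) :=
          sum_congr rfl fun x _ => (inv_mul_cancel_left₀ (hcard x) _).symm
      _ ≤ ∑ x : ι → X, ((fiberOf typeCount x).card : ℝ)⁻¹ *
            ((fiberOf typeCount x₀).card * Real.exp (-(n * entropy (typeFreq x₀)))) := by
          rw [exp_neg_mul_entropy_typeFreq]
          exact sum_le_sum fun x _ => mul_le_mul_of_nonneg_left
            (card_fiberOf_mul_prod_typeFreq_pow_le x₀ x) (by positivity)
      _ = (univ.image (typeCount : (ι → X) → X → ℕ)).card *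
            ((fiberOf typeCount x₀).card * Real.exp (-(n * entropy (typeFreq x₀)))) := by
          rw [← sum_mul, sum_inv_card_fiberOf]
      _ ≤ _ := by gcongr
  rwa [Real.exp_neg, ← mul_assoc, le_mul_inv_iff₀ (Real.exp_pos _), one_mul] at hone

def jointCount (x y : ι → X) : X × X → ℕ := typeCount fun i => (x i, y i)

lemma sum_inv_card_fiberOf_jointCount_le [DecidableEq ι] [Fintype X] (x : ι → X) :
    ∑ y, ((fiberOf (jointCount x) y).card : ℝ)⁻¹
      ≤ ((Fintype.card ι : ℝ) + 1) ^ Fintype.card X ^ 2 := by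
  rw [sum_inv_card_fiberOf, sq, ← Fintype.card_prod]
  exact_mod_cast card_image_le_pow (jointCount x) fun _ b => typeCount_le _ b

end TypeClasses

section Expurgation

variable {α : Type*}

lemma card_filter_one_le_le_sum {s : Finset α} {f : α → ℝ} (hf : ∀ x ∈ s, 0 ≤ f x) :
    ((s.filter (1 ≤ f ·)).card : ℝ) ≤ ∑ x ∈ s, f x :=
  calc ((s.filter (1 ≤ f ·)).card : ℝ) ≤ ∑ x ∈ s.filter (1 ≤ f ·), f x := by
        simpa using card_nsmul_le_sum _ f 1 fun x hx => (mem_filter.1 hx).2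
    _ ≤ ∑ x ∈ s, f x := sum_le_sum_of_subset_of_nonneg (filter_subset _ _) fun x hx _ => hf x hx

variable [DecidableEq α]

lemma sum_powersetCard_sum_sum_erase (T : Finset α) {m : ℕ} (hm : 2 ≤ m) (w : α → α → ℝ) :
    ∑ M ∈ T.powersetCard m, ∑ x ∈ M, ∑ y ∈ M.erase x, w x y
      = (T.card - 2).choose (m - 2) * ∑ x ∈ T, ∑ y ∈ T.erase x, w x y := by
  have hrestrict : ∀ M ∈ T.powersetCard m, ∑ x ∈ M, ∑ y ∈ M.erase x, w x y
      = ∑ x ∈ T, ∑ y ∈ T.erase x, if {x, y} ⊆ M then w x y else 0 := by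
    intro M hM
    have hMT := (mem_powersetCard.1 hM).1
    simp only [insert_subset_iff, singleton_subset_iff, ite_and, sum_ite_irrel, sum_const_zero,
      sum_ite_mem, erase_inter, inter_eq_right.2 hMT]
  rw [sum_congr rfl hrestrict, sum_comm, mul_sum]
  refine sum_congr rfl fun x hx => ?_
  rw [sum_comm, mul_sum]
  refine sum_congr rfl fun y hy => ?_
  obtain ⟨hyx, hyT⟩ := mem_erase.1 hy
  rw [← sum_filter, sum_const, nsmul_eq_mul, card_filter_powersetCard_subset _ _ _
    (insert_subset hx (singleton_subset_iff.2 hyT)) (by rw [card_pair hyx.symm]; exact hm),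
    card_pair hyx.symm]

lemma mul_sub_one_mul_choose_sub_two (t m : ℕ) (hm : 2 ≤ m) :
    ((t : ℝ) * (t - 1)) * (t - 2).choose (m - 2) = ((m : ℝ) * (m - 1)) * t.choose m := by
  have h := congrArg (Nat.cast (R := ℝ)) (Nat.choose_mul (n := t) hm)
  push_cast [Nat.cast_choose_two] at h
  linarith

lemma exists_subset_card_eq_mul_sum_le (T : Finset α) {m : ℕ} (hm : 2 ≤ m) (hmT : m ≤ T.card)
    (w : α → α → ℝ) :
    ∃ M ⊆ T, M.card = m ∧
      ((T.card : ℝ) * (T.card - 1)) * ∑ x ∈ M, ∑ y ∈ M.erase x, w x y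
        ≤ ((m : ℝ) * (m - 1)) * ∑ x ∈ T, ∑ y ∈ T.erase x, w x y := by
  have hsum :
      ∑ M ∈ T.powersetCard m, ((T.card : ℝ) * (T.card - 1)) * ∑ x ∈ M, ∑ y ∈ M.erase x, w x y
        = ∑ M ∈ T.powersetCard m, ((m : ℝ) * (m - 1)) * ∑ x ∈ T, ∑ y ∈ T.erase x, w x y := by
    rw [← mul_sum, sum_powersetCard_sum_sum_erase T hm, sum_const, card_powersetCard, nsmul_eq_mul,
      ← mul_assoc, mul_sub_one_mul_choose_sub_two _ _ hm]
    ring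
  obtain ⟨M, hM, hle⟩ := exists_le_of_sum_le (powersetCard_nonempty.2 hmT) hsum.le
  exact ⟨M, (mem_powersetCard.1 hM).1, (mem_powersetCard.1 hM).2, hle⟩

lemma exists_subset_forall_sum_erase_lt_one (T : Finset α) {w : α → α → ℝ}
    (hw : ∀ x y, 0 ≤ w x y) {m : ℕ} (hm : 2 ≤ m) (hmT : m ≤ T.card) {K : ℝ}
    (hK : ∀ x ∈ T, ∑ y ∈ T.erase x, w x y ≤ K) (hmK : 2 * m * K ≤ T.card) :
    ∃ M ⊆ T, (m : ℝ) / 2 ≤ M.card ∧ M.card ≤ m ∧ ∀ x ∈ M, ∑ y ∈ M.erase x, w x y < 1 := by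
  obtain ⟨M₀, hM₀T, hM₀m, hM₀⟩ := exists_subset_card_eq_mul_sum_le T hm hmT w
  set f : α → ℝ := fun x => ∑ y ∈ M₀.erase x, w x y
  have hf : ∀ x, 0 ≤ f x := fun x => sum_nonneg fun y _ => hw x y
  have hpairs : ∑ x ∈ M₀, f x ≤ m / 2 := by
    have hT : ∑ x ∈ T, ∑ y ∈ T.erase x, w x y ≤ T.card * K := by
      simpa using sum_le_card_nsmul T _ K hK
    have hm' : (2 : ℝ) ≤ m := by exact_mod_cast hm
    have hmT' : (m : ℝ) ≤ T.card := by exact_mod_cast hmT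
    obtain ⟨x, hx⟩ := card_pos.1 (by omega : 0 < T.card)
    have hK0 : 0 ≤ K := (sum_nonneg fun y _ => hw x y).trans (hK x hx)
    have h1 : ((T.card : ℝ) - 1) * ∑ x ∈ M₀, f x ≤ m * (m - 1) * K := by
      have := hM₀.trans (mul_le_mul_of_nonneg_left hT (by nlinarith : (0 : ℝ) ≤ m * (m - 1)))
      nlinarith
    have h2 : 2 * (m * (m - 1) * K) ≤ (m - 1) * T.card := by nlinarith
    nlinarith
  refine ⟨M₀.filter (f · < 1), (filter_subset _ _).trans hM₀T, ?_, ?_, fun x hx => ?_⟩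
  · have hsplit := card_filter_add_card_filter_not (s := M₀) (f · < 1)
    have hbad := card_filter_one_le_le_sum (s := M₀) fun x _ => hf x
    simp only [not_lt] at hsplit
    rw [hM₀m] at hsplit
    have : ((M₀.filter (f · < 1)).card : ℝ) + (M₀.filter (1 ≤ f ·)).card = m := by
      exact_mod_cast hsplit
    linarith
  · exact hM₀m ▸ card_le_card (filter_subset _ _)
  · obtain ⟨hxM₀, hx1⟩ := mem_filter.1 hx
    exact (sum_le_sum_of_subset_of_nonneg (erase_subset_erase x (filter_subset _ _))
      fun y _ _ => hw x y).trans_lt hx1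

end Expurgation

section Codebook

variable {X : Type*} [Fintype X] [DecidableEq X] {n : ℕ}

lemma empDist_eq_typeFreq (x : Fin n → X) : empDist x = typeFreq x := by
  funext a
  simp [empDist, typeFreq, typeCount]

lemma jointDist_eq (x y : Fin n → X) (a b : X) :
    jointDist x y a b = jointCount x y (a, b) / n := by
  simp [jointDist, jointCount, typeCount]

lemma typeClass_empDist (hn : 0 < n) (x₀ : Fin n → X) :
    typeClass n (empDist x₀) = fiberOf typeCount x₀ := by
  have hn' : (n : ℝ) ≠ 0 := by positivity
  ext z
  simp [typeClass, fiberOf, empDist_eq_typeFreq, typeFreq, funext_iff, div_left_inj' hn']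

lemma condTypeClass_eq_fiberOf (hn : 0 < n) {x y : Fin n → X} {V : X → X → ℝ}
    (hV : ∀ a b, V a b * empDist x a = jointDist x y a b) :
    condTypeClass x V = fiberOf (jointCount x) y := by
  have hn' : (n : ℝ) ≠ 0 := by positivity
  ext z
  simp [condTypeClass, fiberOf, hV, jointDist_eq, funext_iff, div_left_inj' hn', eq_comm]

lemma exp_mul_entropy_le_card_typeClass (hn : 0 < n) (x₀ : Fin n → X) :
    Real.exp (n * entropy (empDist x₀))
      ≤ ((n : ℝ) + 1) ^ Fintype.card X * (fiberOf typeCount x₀).card := by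
  have : Nonempty (Fin n) := ⟨⟨0, hn⟩⟩
  simpa [empDist_eq_typeFreq] using exp_mul_entropy_le_card_fiberOf x₀

lemma card_inter_condTypeClass_le (hn : 0 < n) {x : Fin n → X} {S : Finset (Fin n → X)} {B : ℝ}
    (hS : ∑ y ∈ S, ((fiberOf (jointCount x) y).card : ℝ)⁻¹ ≤ B) {V : X → X → ℝ}
    (hV : V ∈ condTypeSet x) :
    ((condTypeClass x V ∩ S).card : ℝ) ≤ (condTypeClass x V).card * B := by
  obtain ⟨y, hy⟩ := hV
  rw [condTypeClass_eq_fiberOf hn hy]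
  have hfib := (card_inter_div_card_fiberOf_le (jointCount x) S y).trans hS
  rwa [div_le_iff₀' (by exact_mod_cast card_pos.2 ⟨y, mem_fiberOf_self _ y⟩)] at hfib

theorem exists_codebook_subset_typeClass (hn : 0 < n) (x₀ : Fin n → X) {R : ℝ}
    (hR : R < entropy (empDist x₀)) {m : ℕ} (hm : 2 ≤ m)
    (hmR : 2 * m * ((n : ℝ) + 1) ^ (Fintype.card X ^ 2 + Fintype.card X) ≤ Real.exp (n * R)) :
    ∃ M ⊆ typeClass n (empDist x₀), (m : ℝ) / 2 ≤ M.card ∧ M.card ≤ m ∧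
      ∀ x ∈ M, ∀ V ∈ condTypeSet x, ((condTypeClass x V ∩ M.erase x).card : ℝ) ≤
        (condTypeClass x V).card * Real.exp (-(n : ℝ) * (entropy (empDist x₀) - R)) := by
  set B := Real.exp (-(n : ℝ) * (entropy (empDist x₀) - R))
  set J := ((n : ℝ) + 1) ^ Fintype.card X ^ 2
  have hB : 0 < B := Real.exp_pos _
  have hB1 : B ≤ 1 := Real.exp_le_one_iff.2 (by nlinarith [(Nat.cast_pos.2 hn : (0 : ℝ) < n)])
  have hJ : 1 ≤ J := one_le_pow₀ (by linarith [(n.cast_nonneg : (0 : ℝ) ≤ n)])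
  set w : (Fin n → X) → (Fin n → X) → ℝ :=
    fun x y => ((fiberOf (jointCount x) y).card : ℝ)⁻¹ * B⁻¹
  have hw : ∀ x y, 0 ≤ w x y := fun x y => by positivity
  have hK : ∀ x ∈ fiberOf typeCount x₀, ∑ y ∈ (fiberOf typeCount x₀).erase x, w x y ≤ J / B :=
    fun x _ => calc ∑ y ∈ (fiberOf typeCount x₀).erase x, w x y ≤ ∑ y, w x y :=
          sum_le_sum_of_subset_of_nonneg (subset_univ _) fun y _ _ => hw x y
      _ ≤ J / B := by
          rw [← sum_mul, div_eq_mul_inv]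
          gcongr
          simpa using sum_inv_card_fiberOf_jointCount_le x
  have hT := exp_mul_entropy_le_card_typeClass hn x₀
  have hmK : 2 * m * (J / B) ≤ (fiberOf typeCount x₀).card := by
    have hsplit : Real.exp (n * R) = Real.exp (n * entropy (empDist x₀)) * B := by
      rw [← Real.exp_add]; ring_nf
    rw [mul_div_assoc', div_le_iff₀ hB]
    refine le_of_mul_le_mul_left ?_ (by positivity : (0 : ℝ) < ((n : ℝ) + 1) ^ Fintype.card X)
    calc ((n : ℝ) + 1) ^ Fintype.card X * (2 * m * J)
        = 2 * m * ((n : ℝ) + 1) ^ (Fintype.card X ^ 2 + Fintype.card X) := by ring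
      _ ≤ Real.exp (n * entropy (empDist x₀)) * B := hsplit ▸ hmR
      _ ≤ _ := by rw [← mul_assoc]; gcongr
  have hmT : m ≤ (fiberOf typeCount x₀).card := by
    have hJB : 1 ≤ J / B := (one_le_div hB).2 (hB1.trans hJ)
    exact_mod_cast (by nlinarith : (m : ℝ) ≤ 2 * m * (J / B)).trans hmK
  obtain ⟨M, hMT, hMm, hMm', hM⟩ :=
    exists_subset_forall_sum_erase_lt_one (fiberOf typeCount x₀) hw hm hmT hK hmK
  refine ⟨M, (typeClass_empDist hn x₀).symm ▸ hMT, hMm, hMm', fun x hx V hV => ?_⟩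
  have hx := hM x hx
  rw [← sum_mul, mul_inv_lt_iff₀ hB, one_mul] at hx
  exact card_inter_condTypeClass_le hn hx.le hV

end Codebook

open Filter in
lemma eventually_mul_pow_le_exp {R : ℝ} (hR : 0 < R) {c : ℝ} (hc : 0 < c) (E : ℕ) :
    ∀ᶠ n : ℕ in atTop, c * ((n : ℝ) + 1) ^ E ≤ Real.exp (n * R) := by
  have h := (tendsto_add_atTop_iff_nat 1).2
    (tendsto_pow_const_div_const_pow_of_one_lt E (Real.one_lt_exp_iff.2 hR))
  filter_upwards [h.eventually (Iic_mem_nhds (by positivity : (0 : ℝ) < (c * Real.exp R)⁻¹))]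
    with n hn
  rw [← Real.exp_nat_mul, div_le_iff₀ (Real.exp_pos _)] at hn
  calc c * ((n : ℝ) + 1) ^ E ≤ c * ((c * Real.exp R)⁻¹ * Real.exp (↑(n + 1) * R)) := by
        gcongr; exact_mod_cast hn
    _ = Real.exp (n * R) := by
        rw [Nat.cast_succ, add_one_mul, Real.exp_add]; field_simp

lemma half_le_floor {a : ℝ} (ha : 2 ≤ a) : a / 2 ≤ ⌊a⌋₊ := by
  linarith [Nat.lt_floor_add_one a]

lemma exp_sub_four_mul_sq_mul_log_le {n D : ℕ} (hn : 2 ≤ n) (hD : 1 ≤ D) (y : ℝ) :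
    Real.exp (y - 4 * D ^ 2 * Real.log (n + 1))
      ≤ Real.exp y / (8 * ((n : ℝ) + 1) ^ (D ^ 2 + D)) := by
  have hn' : (3 : ℝ) ≤ n + 1 := by exact_mod_cast Nat.succ_le_succ hn
  obtain ⟨k, hk⟩ := Nat.exists_eq_add_of_le (by nlinarith : D ^ 2 + D + 2 ≤ 4 * D ^ 2)
  rw [Real.exp_sub, show (4 : ℝ) * D ^ 2 * Real.log (n + 1)
      = ((4 * D ^ 2 : ℕ) : ℝ) * Real.log (n + 1) by push_cast; ring,
    Real.exp_nat_mul, Real.exp_log (by positivity), hk, pow_add, pow_add]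
  refine div_le_div_of_nonneg_left (Real.exp_pos _).le (by positivity) ?_
  have hP : (0 : ℝ) ≤ ((n : ℝ) + 1) ^ (D ^ 2 + D) := by positivity
  calc 8 * ((n : ℝ) + 1) ^ (D ^ 2 + D) ≤ ((n : ℝ) + 1) ^ (D ^ 2 + D) * ((n : ℝ) + 1) ^ 2 * 1 := by
        nlinarith [mul_le_mul_of_nonneg_left (by nlinarith : (8 : ℝ) ≤ ((n : ℝ) + 1) ^ 2) hP]
    _ ≤ _ := by gcongr; exact one_le_pow₀ (by linarith)

/-- **Lemma** (existence of good codebooks). -/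
theorem good_codebook_exists
    {X : Type*} [Fintype X] [DecidableEq X] (R : ℝ) (hR : 0 < R) :
    ∃ C : ℝ, 0 < C ∧ ∃ N : ℕ, ∀ n : ℕ, N ≤ n → ∀ P : X → ℝ, IsType n P → R < entropy P →
      ∃ M : Finset (Fin n → X),
        M ⊆ typeClass n P ∧
        Real.exp ((n : ℝ) * R - C * (Fintype.card X : ℝ) ^ 2 * Real.log (n + 1)) ≤ M.card ∧
        (M.card : ℝ) ≤ Real.exp ((n : ℝ) * R) ∧
        ∀ x ∈ M, ∀ V ∈ condTypeSet x,
          ((condTypeClass x V ∩ M.erase x).card : ℝ) ≤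
            (condTypeClass x V).card * Real.exp (-(n : ℝ) * (entropy P - R)) := by
  set D := Fintype.card X
  obtain ⟨N, hN⟩ := Filter.eventually_atTop.1
    ((eventually_mul_pow_le_exp hR four_pos (D ^ 2 + D)).and (Filter.eventually_ge_atTop 2))
  refine ⟨4, four_pos, N, fun n hn P ⟨x₀, hx₀⟩ hH => ?_⟩
  subst hx₀
  obtain ⟨hexp, hn2⟩ := hN n hn
  have hD : 1 ≤ D := Fintype.card_pos_iff.2 ⟨x₀ ⟨0, by omega⟩⟩
  set a := Real.exp (n * R) / (2 * ((n : ℝ) + 1) ^ (D ^ 2 + D))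
  have ha : 2 ≤ a := by rw [le_div_iff₀ (by positivity)]; linarith
  have hfloor : (⌊a⌋₊ : ℝ) ≤ a := Nat.floor_le (by positivity)
  obtain ⟨M, hMT, hMm, hMm', hM⟩ := exists_codebook_subset_typeClass (by omega) x₀ hH
    (Nat.le_floor (by exact_mod_cast ha)) (by rw [le_div_iff₀ (by positivity)] at hfloor; linarith)
  refine ⟨M, hMT, ?_, ?_, hM⟩
  · calc _ ≤ a / 4 := (exp_sub_four_mul_sq_mul_log_le hn2 hD _).trans_eq (by ring)
      _ ≤ _ := by linarith [half_le_floor ha]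
  · calc (M.card : ℝ) ≤ a := (Nat.cast_le.2 hMm').trans hfloor
      _ ≤ _ := div_le_self (Real.exp_pos _).le
          (by nlinarith [one_le_pow₀ (n := D ^ 2 + D) (by linarith : (1 : ℝ) ≤ n + 1)])

end Paper
end
end

section
/- Spectral bound for averaged unitary representations (representation-theoretic core of the two-norm lemma). Let G be a finite group, H ≤ G a subgroup, and π a unitary representation of G on a finite-dimensional complex inner product space V. Let S be a symmetric finite multiset of elements of G. Define E_H := (1/|H|)·Σ_{h∈H} π(h), E_G := (1/|G|)·Σ_{g∈G} π(g), and M̃ := (1/|S|)·Σ_{s∈S} π(s). Then the operator norm of M̃∘E_H − E_G as a linear map on V is at most ‖T_S − P₁‖, the ℓ²-operator norm of the corresponding matrix difference on ℂ^{G⧸H}. -/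
open scoped BigOperators Matrix ComplexOrder

attribute [local instance] Classical.propDecidable

noncomputable section

/-!
The operator `D = M̃ - E_G` is self-adjoint, because `S` is symmetric and `π` is unitary.
For `v : V` the map `Φ_v : ℂ^{G⧸H} → V`, `x ↦ Σ_g x(gH) • π(g) v`, is `G`-equivariant, so
`D ∘ Φ_v = Φ_v ∘ (T_S - P₁)`, and `E_H v` lies in the range of `Φ_v`. Hence `‖D^k (E_H v)‖`
grows at most like `‖T_S - P₁‖^k`, and for a self-adjoint `D` this already forces
`‖D (E_H v)‖ ≤ ‖T_S - P₁‖ ‖E_H v‖`: Cauchy–Schwarz gives `‖D^k w‖² ≤ ‖w‖ ‖D^{2k} w‖`, hence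
`(‖D w‖ / ‖w‖)^{2^n} ≤ ‖D^{2^n} w‖ / ‖w‖`, and one lets `n → ∞`.
Finally `M̃ E_H - E_G = D E_H` because `E_G E_H = E_G`.
-/

open ContinuousLinearMap Filter

theorem le_of_frequently_pow_le_mul_pow {a b C : ℝ} (hb : 0 ≤ b)
    (h : ∃ᶠ n in atTop, a ^ n ≤ C * b ^ n) : a ≤ b := by
  by_contra! hab
  have ha : 0 < a := hb.trans_lt hab
  have hlim : Tendsto (fun n : ℕ => C * (b / a) ^ n) atTop (nhds 0) := by
    simpa using (tendsto_pow_atTop_nhds_zero_of_lt_one (div_nonneg hb ha.le)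
      ((div_lt_one ha).2 hab)).const_mul C
  obtain ⟨n, hn, hlt⟩ := (h.and_eventually (hlim.eventually (gt_mem_nhds one_pos))).exists
  rw [div_pow, ← mul_div_assoc, div_lt_one (pow_pos ha n)] at hlt
  linarith

theorem norm_avg_apply_le {𝕜 E ι : Type*} [RCLike 𝕜] [NormedAddCommGroup E] [NormedSpace 𝕜 E]
    [Fintype ι] (f : ι → E →L[𝕜] E) (hf : ∀ i v, ‖f i v‖ = ‖v‖) (v : E) :
    ‖((Nat.card ι : 𝕜)⁻¹ • ∑ i, f i) v‖ ≤ ‖v‖ := by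
  rcases isEmpty_or_nonempty ι with _ | _
  · simp
  calc ‖((Nat.card ι : 𝕜)⁻¹ • ∑ i, f i) v‖ ≤ (Nat.card ι : ℝ)⁻¹ * ∑ i, ‖f i v‖ := by
        rw [smul_apply, sum_apply, norm_smul, norm_inv, RCLike.norm_natCast]
        gcongr
        exact norm_sum_le _ _
    _ = ‖v‖ := by simp [hf, Nat.card_eq_fintype_card, Finset.card_univ]

theorem ContinuousLinearMap.multisetSum_map_comp {𝕜 E F ι : Type*} [RCLike 𝕜]
    [NormedAddCommGroup E] [NormedSpace 𝕜 E] [NormedAddCommGroup F] [NormedSpace 𝕜 F]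
    {Φ : F →L[𝕜] E} {f : ι → E →L[𝕜] E} {b : ι → F →L[𝕜] F}
    (h : ∀ i, f i ∘L Φ = Φ ∘L b i) (S : Multiset ι) :
    (S.map f).sum ∘L Φ = Φ ∘L (S.map b).sum := by
  induction S using Multiset.induction_on with
  | empty => simp
  | cons i S ih => simp [add_comp, comp_add, h, ih]

theorem isSelfAdjoint_multisetSum_map {R ι : Type*} [AddCommMonoid R] [StarAddMonoid R]
    [InvolutiveInv ι] {f : ι → R} (hf : ∀ i, star (f i) = f i⁻¹) {S : Multiset ι}
    (hS : S.map (·⁻¹) = S) : IsSelfAdjoint (S.map f).sum := by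
  change starAddEquiv _ = _
  rw [map_multiset_sum, Multiset.map_map]
  conv_rhs => rw [← hS, Multiset.map_map]
  exact congrArg _ (Multiset.map_congr rfl fun i _ => hf i)

theorem isSelfAdjoint_sum_univ {R ι : Type*} [AddCommMonoid R] [StarAddMonoid R]
    [InvolutiveInv ι] [Fintype ι] {f : ι → R} (hf : ∀ i, star (f i) = f i⁻¹) :
    IsSelfAdjoint (∑ i, f i) := by
  rw [IsSelfAdjoint, star_sum]
  exact Fintype.sum_equiv (Equiv.inv ι) _ _ hf

theorem MonoidHom.sum_mul_map_eq_sum {G A : Type*} [Group G] [Fintype G] [Semiring A]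
    (ρ : G →* A) (g : G) : (∑ x, ρ x) * ρ g = ∑ x, ρ x := by
  simp_rw [Finset.sum_mul, ← map_mul]
  exact Fintype.sum_equiv (Equiv.mulRight g) _ _ fun _ => rfl

section SelfAdjoint

variable {𝕜 E F : Type*} [RCLike 𝕜] [NormedAddCommGroup E] [InnerProductSpace 𝕜 E]
  [CompleteSpace E] [NormedAddCommGroup F] [NormedSpace 𝕜 F] {D : E →L[𝕜] E}

theorem IsSelfAdjoint.norm_pow_apply_sq_le (hD : IsSelfAdjoint D) (w : E) (k : ℕ) :
    ‖(D ^ k) w‖ ^ 2 ≤ ‖w‖ * ‖(D ^ (2 * k)) w‖ := by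
  have h : inner 𝕜 ((D ^ k) w) ((D ^ k) w) = inner 𝕜 w ((D ^ (2 * k)) w) := by
    rw [two_mul, pow_add, mul_apply_eq_comp]
    exact (hD.pow k).isSymmetric _ _
  calc ‖(D ^ k) w‖ ^ 2 = ‖inner 𝕜 w ((D ^ (2 * k)) w)‖ := by
        rw [← h, inner_self_eq_norm_sq_to_K, norm_pow, RCLike.norm_ofReal, abs_norm]
    _ ≤ ‖w‖ * ‖(D ^ (2 * k)) w‖ := norm_inner_le_norm _ _

theorem IsSelfAdjoint.div_norm_pow_two_pow_le (hD : IsSelfAdjoint D) (w : E) (n : ℕ) :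
    (‖D w‖ / ‖w‖) ^ 2 ^ n ≤ ‖(D ^ 2 ^ n) w‖ / ‖w‖ := by
  rcases eq_or_ne w 0 with rfl | hw
  · simp
  have hw' : ‖w‖ ≠ 0 := norm_ne_zero_iff.2 hw
  induction n with
  | zero => simp
  | succ n ih =>
    calc (‖D w‖ / ‖w‖) ^ 2 ^ (n + 1) = ((‖D w‖ / ‖w‖) ^ 2 ^ n) ^ 2 := by rw [pow_succ, pow_mul]
      _ ≤ (‖(D ^ 2 ^ n) w‖ / ‖w‖) ^ 2 := by gcongr
      _ ≤ ‖w‖ * ‖(D ^ (2 * 2 ^ n)) w‖ / (‖w‖ * ‖w‖) := by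
        rw [div_pow, sq ‖w‖]
        gcongr
        exact hD.norm_pow_apply_sq_le w _
      _ = ‖(D ^ 2 ^ (n + 1)) w‖ / ‖w‖ := by rw [mul_div_mul_left _ _ hw', ← pow_succ']

theorem IsSelfAdjoint.norm_apply_le_of_forall_norm_pow_apply_le (hD : IsSelfAdjoint D)
    {w : E} {C t : ℝ} (ht : 0 ≤ t) (h : ∀ k, ‖(D ^ k) w‖ ≤ C * t ^ k) : ‖D w‖ ≤ t * ‖w‖ := by
  rcases eq_or_ne w 0 with rfl | hw
  · simp
  have hw' : 0 < ‖w‖ := norm_pos_iff.2 hw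
  rw [← div_le_iff₀ hw']
  refine le_of_frequently_pow_le_mul_pow (C := C / ‖w‖) ht <|
    (tendsto_pow_atTop_atTop_of_one_lt one_lt_two).frequently <|
      Frequently.of_forall fun n => ?_
  calc (‖D w‖ / ‖w‖) ^ 2 ^ n ≤ ‖(D ^ 2 ^ n) w‖ / ‖w‖ := hD.div_norm_pow_two_pow_le w n
    _ ≤ C * t ^ 2 ^ n / ‖w‖ := by gcongr; exact h _
    _ = C / ‖w‖ * t ^ 2 ^ n := by ring

theorem IsSelfAdjoint.norm_apply_le_of_comp_eq (hD : IsSelfAdjoint D) {Φ : F →L[𝕜] E}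
    {B : F →L[𝕜] F} (hΦ : D ∘L Φ = Φ ∘L B) (x : F) : ‖D (Φ x)‖ ≤ ‖B‖ * ‖Φ x‖ := by
  have hpow : ∀ k : ℕ, (D ^ k) (Φ x) = Φ ((B ^ k) x) := by
    intro k
    induction k with
    | zero => rfl
    | succ k ih => rw [pow_succ', mul_apply_eq_comp, ih, ← comp_apply, hΦ, pow_succ']; rfl
  have hBpow : ∀ k : ℕ, ‖(B ^ k) x‖ ≤ ‖B‖ ^ k * ‖x‖ := by
    intro k
    induction k with
    | zero => simp
    | succ k ih =>
      rw [pow_succ', mul_apply_eq_comp, pow_succ', mul_assoc]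
      exact B.le_opNorm_of_le ih
  refine hD.norm_apply_le_of_forall_norm_pow_apply_le (C := ‖Φ‖ * ‖x‖) (norm_nonneg B) fun k => ?_
  calc ‖(D ^ k) (Φ x)‖ = ‖Φ ((B ^ k) x)‖ := by rw [hpow]
    _ ≤ ‖Φ‖ * (‖B‖ ^ k * ‖x‖) := Φ.le_opNorm_of_le (hBpow k)
    _ = ‖Φ‖ * ‖x‖ * ‖B‖ ^ k := by ring

end SelfAdjoint

namespace Paper

theorem toEuclideanCLM_actMatrix_apply {G β : Type*} [Group G] [MulAction G β] [Fintype β]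
    [DecidableEq β] (g : G) (x : EuclideanSpace ℂ β) (u : β) :
    Matrix.toEuclideanCLM (n := β) (𝕜 := ℂ) (actMatrix G β g) x u = x (g⁻¹ • u) := by
  simp [actMatrix, Matrix.mulVec, dotProduct, ← eq_inv_smul_iff]

section Representation

variable {G : Type*} [Group G] {V : Type*} [NormedAddCommGroup V] [InnerProductSpace ℂ V]
  (π : G →* (V →L[ℂ] V))

theorem star_map_eq_map_inv [CompleteSpace V] (hπ : ∀ g v, ‖π g v‖ = ‖v‖) (g : G) :
    star (π g) = π g⁻¹ := by
  refine ((eq_adjoint_iff _ _).2 fun x y => ?_).symm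
  let U : V →ₗᵢ[ℂ] V := ⟨(π g).toLinearMap, hπ g⟩
  rw [← U.inner_map_map]
  simp [U, ← mul_apply_eq_comp, ← map_mul]

variable [Fintype G]

/-- The operator `M̃ - E_G`. -/
def walkSubAvg (S : Multiset G) : V →L[ℂ] V :=
  (S.card : ℂ)⁻¹ • (S.map π).sum - (Nat.card G : ℂ)⁻¹ • ∑ g, π g

theorem isSelfAdjoint_walkSubAvg [CompleteSpace V] (hπ : ∀ g v, ‖π g v‖ = ‖v‖)
    {S : Multiset G} (hS : S.map (·⁻¹) = S) : IsSelfAdjoint (walkSubAvg π S) :=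
  ((IsSelfAdjoint.natCast _).inv₀.smul
      (isSelfAdjoint_multisetSum_map (star_map_eq_map_inv π hπ) hS)).sub
    ((IsSelfAdjoint.natCast _).inv₀.smul (isSelfAdjoint_sum_univ (star_map_eq_map_inv π hπ)))

theorem avg_mul_subgroupAvg {A : Type*} [Semiring A] [Algebra ℂ A] (ρ : G →* A)
    (H : Subgroup G) :
    ((Nat.card G : ℂ)⁻¹ • ∑ g, ρ g) * ((Nat.card H : ℂ)⁻¹ • ∑ h : H, ρ h) =
      (Nat.card G : ℂ)⁻¹ • ∑ g, ρ g := by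
  rw [smul_mul_smul_comm, Finset.mul_sum,
    Finset.sum_congr rfl fun (h : H) _ => ρ.sum_mul_map_eq_sum h, Finset.sum_const,
    Finset.card_univ, ← Nat.card_eq_fintype_card, ← Nat.cast_smul_eq_nsmul ℂ, smul_smul,
    mul_assoc, inv_mul_cancel₀ (Nat.cast_ne_zero.2 Nat.card_pos.ne'), mul_one]

variable (H : Subgroup G)

def cosetMap (v : V) : EuclideanSpace ℂ (G ⧸ H) →L[ℂ] V :=
  ∑ g : G, (EuclideanSpace.proj (g : G ⧸ H)).smulRight (π g v)

theorem cosetMap_apply (v : V) (x : EuclideanSpace ℂ (G ⧸ H)) :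
    cosetMap π H v x = ∑ g : G, x g • π g v := by
  simp [cosetMap]

theorem map_comp_cosetMap (v : V) (g : G) :
    π g ∘L cosetMap π H v =
      cosetMap π H v ∘L Matrix.toEuclideanCLM (n := G ⧸ H) (𝕜 := ℂ) (actMatrix G (G ⧸ H) g) := by
  ext x
  simp only [comp_apply, cosetMap_apply, map_sum, map_smul, toEuclideanCLM_actMatrix_apply]
  refine Fintype.sum_equiv (Equiv.mulLeft g) _ _ fun g' => ?_
  rw [← mul_apply_eq_comp, ← map_mul]
  simp [MulAction.Quotient.smul_mk]

theorem walkSubAvg_comp_cosetMap (S : Multiset G) (v : V) :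
    walkSubAvg π S ∘L cosetMap π H v =
      cosetMap π H v ∘L Matrix.toEuclideanCLM (n := G ⧸ H) (𝕜 := ℂ)
        (transMatrix G (G ⧸ H) S - avgMatrix G (G ⧸ H)) := by
  simp only [walkSubAvg, transMatrix, avgMatrix, map_sub, map_smul, map_multiset_sum,
    Multiset.map_map, map_sum, sub_comp, smul_comp, comp_sub, comp_smul, finsetSum_comp,
    comp_finsetSum, Nat.card_eq_fintype_card, map_comp_cosetMap]
  rw [multisetSum_map_comp (map_comp_cosetMap π H v)]
  rfl

theorem subgroupAvg_apply_eq_cosetMap (v : V) :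
    ((Nat.card H : ℂ)⁻¹ • ∑ h : H, π h) v =
      cosetMap π H v ((Nat.card H : ℂ)⁻¹ • EuclideanSpace.single ((1 : G) : G ⧸ H) 1) := by
  rw [map_smul, cosetMap_apply, smul_apply, sum_apply]
  congr 1
  simp only [PiLp.single_apply, QuotientGroup.eq, mul_one, inv_mem_iff, ite_smul, one_smul,
    zero_smul, Finset.sum_ite, Finset.sum_const_zero, add_zero]
  symm
  exact Finset.sum_subtype _ (by simp) _

theorem norm_walkSubAvg_subgroupAvg_apply_le [CompleteSpace V] (hπ : ∀ g v, ‖π g v‖ = ‖v‖)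
    {S : Multiset G} (hS : S.map (·⁻¹) = S) (v : V) :
    ‖walkSubAvg π S (((Nat.card H : ℂ)⁻¹ • ∑ h : H, π h) v)‖ ≤
      l2opNorm (transMatrix G (G ⧸ H) S - avgMatrix G (G ⧸ H)) *
        ‖((Nat.card H : ℂ)⁻¹ • ∑ h : H, π h) v‖ := by
  rw [subgroupAvg_apply_eq_cosetMap]
  exact (isSelfAdjoint_walkSubAvg π hπ hS).norm_apply_le_of_comp_eq
    (walkSubAvg_comp_cosetMap π H S v) _

end Representation

theorem averaged_rep_spectral_bound_general
    {G : Type*} [Group G] [Fintype G] (H : Subgroup G)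
    {V : Type*} [NormedAddCommGroup V] [InnerProductSpace ℂ V] [FiniteDimensional ℂ V]
    (π : G →* (V →L[ℂ] V)) (hπ : ∀ (g : G) (v : V), ‖π g v‖ = ‖v‖)
    (S : Multiset G) (hsymm : S.map (fun s => s⁻¹) = S) :
    ‖(((S.card : ℂ))⁻¹ • (S.map (fun s => π s)).sum) *
          (((Nat.card H : ℂ))⁻¹ • ∑ h : H, π (h : G)) -
        ((Nat.card G : ℂ))⁻¹ • ∑ g : G, π g‖ ≤
      l2opNorm (transMatrix G (G ⧸ H) S - avgMatrix G (G ⧸ H)) := by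
  set EH : V →L[ℂ] V := (Nat.card H : ℂ)⁻¹ • ∑ h : H, π h
  have hEG : (Nat.card G : ℂ)⁻¹ • ∑ g, π g = ((Nat.card G : ℂ)⁻¹ • ∑ g, π g) * EH :=
    (avg_mul_subgroupAvg π H).symm
  change ‖((S.card : ℂ)⁻¹ • (S.map π).sum) * EH - _‖ ≤ _
  rw [hEG, ← sub_mul]
  refine opNorm_le_bound _ (norm_nonneg _) fun v => ?_
  exact (norm_walkSubAvg_subgroupAvg_apply_le π H hπ hsymm v).trans
    (mul_le_mul_of_nonneg_left (norm_avg_apply_le _ (fun h : H => hπ h) v) (norm_nonneg _))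

/-- Spectral bound for averaged unitary representations
(representation-theoretic core of the two-norm lemma). -/
theorem averaged_rep_spectral_bound
    {G : Type*} [Group G] [Fintype G] [DecidableEq G] (H : Subgroup G)
    {V : Type*} [NormedAddCommGroup V] [InnerProductSpace ℂ V] [FiniteDimensional ℂ V]
    (π : G →* (V →L[ℂ] V)) (hπ : ∀ (g : G) (v : V), ‖π g v‖ = ‖v‖)
    (S : Multiset G) (hsymm : S.map (fun s => s⁻¹) = S) :
    ‖(((S.card : ℂ))⁻¹ • (S.map (fun s => π s)).sum) *
          (((Nat.card H : ℂ))⁻¹ • ∑ h : H, π (h : G)) -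
        ((Nat.card G : ℂ))⁻¹ • ∑ g : G, π g‖ ≤
      l2opNorm (transMatrix G (G ⧸ H) S - avgMatrix G (G ⧸ H)) :=
  averaged_rep_spectral_bound_general H π hπ S hsymm

end Paper
end
end

section
/- Corollary (random-coding bound for setwise good codebooks). Let P be a type of denominator n over 𝒳, R and δ reals, β > 0, J, K ∈ ℕ, and let K^1,…,K^J be multisets of strings of T_P with |K^j| = K; set M := ⊎_j K^j (multiset union) and assume |M \ K^j| = K(J−1) ≥ exp(nR−δ). Fix j and x ∈ K^j such that |T_V(x) ∩ (M \ K^j)| ≤ β·|T_V(x)|·e^{−n(H(P)−R)} for every conditional type V ∈ 𝒱(x,𝒳), intersections counted with multiplicity. Then for every y ∈ T_P \ {x}: Σ_{s∈S_x} (multiplicity of s·y in M \ K^j) / (|S_x|·|M \ K^j|) ≤ β·e^{−n·H(P) + δ}. -/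
/-!
Let `V` be the conditional type of `y` given `x`. Two strings have the same joint type with `x`
exactly when they differ by a permutation fixing `x`, so `T_V(x)` is the `S_x`-orbit of `y`. By
orbit–stabilizer, `s • y` is then uniformly distributed on `T_V(x)` as `s` ranges over `S_x`, and the
left-hand side equals `|T_V(x) ∩ (M \ K^j)| / (|T_V(x)| · |M \ K^j|)`. Goodness of `x` for `V` and
`|M \ K^j| = K (J - 1) ≥ exp (n R - δ)` bound this by `β exp (-n H(P) + δ)`.
-/

open scoped BigOperators Matrix ComplexOrder

attribute [local instance] Classical.propDecidable

noncomputable section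

open Finset MulAction

namespace MulAction

variable {G α : Type*} [Group G] [Fintype G] [MulAction G α] [DecidableEq α]

theorem card_filter_smul_eq_card_stabilizer {a b : α} (hb : b ∈ orbit G a) :
    #{g : G | g • a = b} = Nat.card (stabilizer G a) := by
  obtain ⟨h, rfl⟩ := hb
  rw [← Fintype.card_subtype, ← Nat.card_eq_fintype_card]
  refine Nat.card_congr ((Equiv.mulLeft h⁻¹).subtypeEquiv fun g => ?_)
  simp [mem_stabilizer_iff, mul_smul, inv_smul_eq_iff]

theorem sum_smul_eq_card_stabilizer_nsmul_sum {β : Type*} [AddCommMonoid β] (f : α → β) {a : α}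
    {O : Finset α} (hO : ↑O = orbit G a) :
    ∑ g : G, f (g • a) = Nat.card (stabilizer G a) • ∑ b ∈ O, f b := by
  have himage : (univ : Finset G).image (· • a) = O := by
    ext b; simp [← Finset.mem_coe, hO, mem_orbit_iff]
  rw [Finset.sum_comp, himage, Finset.smul_sum]
  refine Finset.sum_congr rfl fun b hb => ?_
  rw [card_filter_smul_eq_card_stabilizer (hO ▸ Finset.mem_coe.mpr hb)]

theorem sum_count_smul_mul_card_orbit (M : Multiset α) {a : α} {O : Finset α}
    (hO : ↑O = orbit G a) :
    (∑ g : G, M.count (g • a)) * #O = Nat.card G * (M.filter (· ∈ O)).card := by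
  have hcount : ∑ b ∈ O, M.count b = (M.filter (· ∈ O)).card := by
    rw [← Multiset.sum_count_eq_card (s := O) (by simp)]
    exact Finset.sum_congr rfl fun b hb => (Multiset.count_filter_of_pos hb).symm
  have hindex : (stabilizer G a).index = #O := by
    rw [index_stabilizer, ← hO, Set.ncard_coe_finset]
  rw [sum_smul_eq_card_stabilizer_nsmul_sum (M.count ·) hO, hcount, smul_eq_mul,
    ← (stabilizer G a).card_mul_index, hindex]
  ring

end MulAction

theorem Multiset.card_sum_sub_of_card_eq {ι α : Type*} [Fintype ι] [DecidableEq α]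
    {Ks : ι → Multiset α} {K : ℕ} (hK : ∀ i, (Ks i).card = K) (j : ι) :
    (∑ i, Ks i - Ks j).card = K * (Fintype.card ι - 1) := by
  rw [Multiset.card_sub (Finset.single_le_sum (fun i _ => Multiset.zero_le _) (mem_univ j)),
    Multiset.card_sum]
  simp [hK, Nat.mul_sub_one, mul_comm]

namespace Paper

-- Under `arrowAction`, `s • y` unfolds to `permSmul s y`.
attribute [local instance] arrowAction

lemma mem_stabFinset_iff {X : Type*} [DecidableEq X] {n : ℕ} (x : Fin n → X)
    (s : Equiv.Perm (Fin n)) : s ∈ stabFinset x ↔ s ∈ permStab x := by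
  simp only [stabFinset, mem_filter, mem_univ, true_and]
  rfl

section Types

variable {X : Type*} [Fintype X] [DecidableEq X] {n : ℕ}

lemma card_filter_eq_mul_empDist (u : Fin n → X) (a : X) :
    (#{i | u i = a} : ℝ) = n * empDist u a := by
  rcases Nat.eq_zero_or_pos n with rfl | hn
  · simp
  · rw [empDist, mul_div_cancel₀ _ (by positivity)]

lemma empDist_permSmul (s : Equiv.Perm (Fin n)) (u : Fin n → X) :
    empDist (permSmul s u) = empDist u := by
  funext a
  unfold empDist
  congr 2
  refine Finset.card_equiv s.symm fun i => ?_
  simp only [Finset.mem_filter, Finset.mem_univ, true_and]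
  rfl

lemma exists_permSmul_eq_of_empDist_eq {u v : Fin n → X} (h : empDist u = empDist v) :
    ∃ s : Equiv.Perm (Fin n), permSmul s u = v := by
  have hfiber : ∀ a, Fintype.card {i // v i = a} = Fintype.card {i // u i = a} := fun a => by
    simp only [Fintype.card_subtype]
    exact_mod_cast (card_filter_eq_mul_empDist v a).trans
      ((congrFun h.symm a ▸ card_filter_eq_mul_empDist u a).symm)
  let e a := Fintype.equivOfCardEq (hfiber a)
  let σ : Equiv.Perm (Fin n) := (Equiv.sigmaFiberEquiv v).symm.trans
    ((Equiv.sigmaCongrRight e).trans (Equiv.sigmaFiberEquiv u))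
  exact ⟨σ⁻¹, funext fun i => (e (v i) ⟨i, rfl⟩).2⟩

lemma jointDist_eq_empDist_pair (x y : Fin n → X) (a b : X) :
    jointDist x y a b = empDist (fun i => (x i, y i)) (a, b) := by
  simp only [jointDist, empDist, Prod.mk.injEq]

lemma jointDist_eq_jointDist_iff (x y z : Fin n → X) :
    jointDist x y = jointDist x z ↔
      empDist (fun i => (x i, y i)) = empDist (fun i => (x i, z i)) := by
  simp only [funext_iff, Prod.forall, jointDist_eq_empDist_pair]

lemma jointDist_le_empDist (x y : Fin n → X) (a b : X) : jointDist x y a b ≤ empDist x a := by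
  unfold jointDist empDist
  gcongr
  exact fun h => h.1

lemma mem_orbit_permStab_iff (x y z : Fin n → X) :
    z ∈ orbit (permStab x) y ↔ jointDist x z = jointDist x y := by
  rw [jointDist_eq_jointDist_iff]
  constructor
  · rintro ⟨⟨s, hs⟩, rfl⟩
    have hpair : (fun i => (x i, permSmul s y i)) = permSmul s (fun i => (x i, y i)) :=
      funext fun i => Prod.ext (congrFun hs i).symm rfl
    exact hpair ▸ empDist_permSmul s _
  · intro h
    obtain ⟨s, hs⟩ := exists_permSmul_eq_of_empDist_eq h.symm
    exact ⟨⟨s, congrArg (Prod.fst ∘ ·) hs⟩, congrArg (Prod.snd ∘ ·) hs⟩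

/-- The conditional type `V_{y|x}`. Where `P_x(a) = 0` the division returns `0`, which is
harmless: there `V(·|a)` is unconstrained. -/
def condTypeOf (x y : Fin n → X) (a b : X) : ℝ :=
  jointDist x y a b / empDist x a

lemma condTypeOf_mul_empDist (x y : Fin n → X) (a b : X) :
    condTypeOf x y a b * empDist x a = jointDist x y a b :=
  div_mul_cancel_of_imp fun h =>
    le_antisymm (h ▸ jointDist_le_empDist x y a b) (by unfold jointDist; positivity)

lemma condTypeOf_mem_condTypeSet (x y : Fin n → X) : condTypeOf x y ∈ condTypeSet x :=
  ⟨y, condTypeOf_mul_empDist x y⟩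

lemma coe_condTypeClass_condTypeOf (x y : Fin n → X) :
    (condTypeClass x (condTypeOf x y) : Set (Fin n → X)) = orbit (permStab x) y := by
  ext z
  simp only [condTypeClass, coe_filter, mem_univ, true_and,
    condTypeOf_mul_empDist, mem_orbit_permStab_iff, funext_iff]
  exact forall_congr' fun a => forall_congr' fun b => eq_comm

lemma mem_condTypeClass_condTypeOf_self (x y : Fin n → X) :
    y ∈ condTypeClass x (condTypeOf x y) := by
  rw [← Finset.mem_coe, coe_condTypeClass_condTypeOf]
  exact mem_orbit_self y

lemma sum_stabFinset_count_mul_card_condTypeClass (M : Multiset (Fin n → X)) (x y : Fin n → X) :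
    (∑ s ∈ stabFinset x, M.count (permSmul s y)) * #(condTypeClass x (condTypeOf x y)) =
      #(stabFinset x) * (M.filter (· ∈ condTypeClass x (condTypeOf x y))).card := by
  rw [Finset.sum_subtype _ (mem_stabFinset_iff x),
    ← Fintype.card_of_subtype _ (mem_stabFinset_iff x), ← Nat.card_eq_fintype_card]
  exact sum_count_smul_mul_card_orbit M (coe_condTypeClass_condTypeOf x y)

end Types


theorem setwise_good_random_coding_bound_general
    {X : Type*} [Fintype X] [DecidableEq X] {n : ℕ}
    (P : X → ℝ) (R δ β : ℝ) (hβ : 0 < β)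
    (J K : ℕ) (Ks : Fin J → Multiset (Fin n → X))
    (hKcard : ∀ j, (Ks j).card = K)
    (hMcard : Real.exp ((n : ℝ) * R - δ) ≤ (K * (J - 1) : ℕ))
    (j : Fin J) (x : Fin n → X)
    (hgood : ∀ V ∈ condTypeSet x,
      ((((Finset.univ.sum Ks) - Ks j).filter (fun y => y ∈ condTypeClass x V)).card : ℝ) ≤
        β * (condTypeClass x V).card * Real.exp (-(n : ℝ) * (entropy P - R))) :
    ∀ y ∈ typeClass n P, y ≠ x →
      ((∑ s ∈ stabFinset x, ((Finset.univ.sum Ks) - Ks j).count (permSmul s y) : ℕ) : ℝ) /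
          ((stabFinset x).card * ((Finset.univ.sum Ks) - Ks j).card) ≤
        β * Real.exp (-((n : ℝ) * entropy P) + δ) := by
  intro y _ _
  set M := Finset.univ.sum Ks - Ks j
  set T := condTypeClass x (condTypeOf x y)
  have hcount : ((∑ s ∈ stabFinset x, M.count (permSmul s y) : ℕ) : ℝ) * #T =
      #(stabFinset x) * (M.filter (· ∈ T)).card := by
    exact_mod_cast sum_stabFinset_count_mul_card_condTypeClass M x y
  have hT : (0 : ℝ) < #T := by
    exact_mod_cast Finset.card_pos.mpr ⟨y, mem_condTypeClass_condTypeOf_self x y⟩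
  have hstab : (0 : ℝ) < #(stabFinset x) := by
    exact_mod_cast Finset.card_pos.mpr ⟨1, (mem_stabFinset_iff x 1).mpr (permStab x).one_mem⟩
  have hM : Real.exp (n * R - δ) ≤ M.card := by
    rwa [Multiset.card_sum_sub_of_card_eq hKcard, Fintype.card_fin]
  have hsum : ((∑ s ∈ stabFinset x, M.count (permSmul s y) : ℕ) : ℝ) ≤
      #(stabFinset x) * (β * Real.exp (-(n : ℝ) * (entropy P - R))) := by
    refine le_of_mul_le_mul_right ?_ hT
    calc _ = (#(stabFinset x) : ℝ) * (M.filter (· ∈ T)).card := hcount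
      _ ≤ #(stabFinset x) * (β * #T * Real.exp (-(n : ℝ) * (entropy P - R))) := by
        gcongr
        exact hgood _ (condTypeOf_mem_condTypeSet x y)
      _ = _ := by ring
  rw [div_le_iff₀ (mul_pos hstab ((Real.exp_pos _).trans_le hM))]
  calc _ ≤ _ := hsum
    _ = β * Real.exp (-(n * entropy P) + δ) * (#(stabFinset x) * Real.exp (n * R - δ)) := by
      rw [mul_mul_mul_comm, ← Real.exp_add]; ring_nf
    _ ≤ _ := by gcongr

/-- **Corollary** (random-coding bound for setwise good codebooks). -/
theorem setwise_good_random_coding_bound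
    {X : Type*} [Fintype X] [DecidableEq X] {n : ℕ}
    (P : X → ℝ) (hP : IsType n P) (R δ β : ℝ) (hβ : 0 < β)
    (J K : ℕ) (Ks : Fin J → Multiset (Fin n → X))
    (hKtype : ∀ j, ∀ x ∈ Ks j, x ∈ typeClass n P)
    (hKcard : ∀ j, (Ks j).card = K)
    (hMcard : Real.exp ((n : ℝ) * R - δ) ≤ (K * (J - 1) : ℕ))
    (j : Fin J) (x : Fin n → X) (hx : x ∈ Ks j)
    (hgood : ∀ V ∈ condTypeSet x,
      ((((Finset.univ.sum Ks) - Ks j).filter (fun y => y ∈ condTypeClass x V)).card : ℝ) ≤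
        β * (condTypeClass x V).card * Real.exp (-(n : ℝ) * (entropy P - R))) :
    ∀ y ∈ typeClass n P, y ≠ x →
      ((∑ s ∈ stabFinset x, ((Finset.univ.sum Ks) - Ks j).count (permSmul s y) : ℕ) : ℝ) /
          ((stabFinset x).card * ((Finset.univ.sum Ks) - Ks j).card) ≤
        β * Real.exp (-((n : ℝ) * entropy P) + δ) :=
  setwise_good_random_coding_bound_general P R δ β hβ J K Ks hKcard hMcard j x hgood

end Paper
end
end

section
/- Augustin-information identity for constant-composition inputs. Let P be a type of denominator n over 𝒳 with nondecreasing representative x_P, W a c-q channel with d-dimensional output, α ∈ (1,2], and α' := α/(α−1). Then the infimum over d×d density matrices σ whose support contains supp W(x) for every x with P(x) > 0 of ‖ (σ^{⊗n})^{−1/(2α')} · W^{⊗n}(x_P) · (σ^{⊗n})^{−1/(2α')} ‖_α equals exp( ((α−1)/α)·n·Ĭ_α(X:B)_{W^P} ), where negative matrix powers are taken on the support of σ. -/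
open scoped BigOperators Matrix ComplexOrder

attribute [local instance] Classical.propDecidable

noncomputable section

namespace Paper

/-!
For a state `σ` with `σ = U diag(λ) U†`, the tensor power `σ^{⊗n}` is diagonalised by `U^{⊗n}`
with product eigenvalues, so `(σ^{⊗n})^r = (σ^r)^{⊗n}` and the sandwiched operator is the tensor
product `⊗ₖ σ^r W(x_k) σ^r`. Schatten norms are multiplicative over tensor products, hence the
objective equals `∏ₐ ‖σ^r W(a) σ^r‖_α^{n P(a)} = exp((α-1)/α · n · Σₐ P(a) D̃_α(W(a)‖σ))` for
every admissible `σ`. Since `t ↦ exp(c t)` is monotone and continuous it commutes with the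
infimum. The support condition makes each factor at least `1/d`, which keeps the logarithms
finite and the infimum bounded below.
-/

section ConjDiag

variable {m : Type*} [Fintype m] [DecidableEq m]

def conjDiag (U : Matrix m m ℂ) (f : m → ℝ) : Matrix m m ℂ :=
  U * Matrix.diagonal (fun i => (f i : ℂ)) * star U

variable {U : Matrix m m ℂ}

lemma conjDiag_isHermitian (U : Matrix m m ℂ) (f : m → ℝ) : (conjDiag U f).IsHermitian := by
  simp [conjDiag, Matrix.IsHermitian, Matrix.star_eq_conjTranspose, Matrix.mul_assoc,
    Pi.star_def]

lemma conjDiag_posSemidef (U : Matrix m m ℂ) {f : m → ℝ} (hf : 0 ≤ f) :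
    (conjDiag U f).PosSemidef :=
  (Matrix.posSemidef_diagonal_iff.mpr fun i => Complex.zero_le_real.mpr (hf i))
    |>.mul_mul_conjTranspose_same U

lemma conjDiag_add (U : Matrix m m ℂ) (f g : m → ℝ) :
    conjDiag U f + conjDiag U g = conjDiag U (f + g) := by
  simp [conjDiag, ← Matrix.add_mul, ← Matrix.mul_add]

lemma conjDiag_sub (U : Matrix m m ℂ) (f g : m → ℝ) :
    conjDiag U f - conjDiag U g = conjDiag U (f - g) := by
  simp [conjDiag, ← Matrix.sub_mul, ← Matrix.mul_sub]

lemma conjDiag_mul (hU : U ∈ Matrix.unitaryGroup m ℂ) (f g : m → ℝ) :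
    conjDiag U f * conjDiag U g = conjDiag U (f * g) := by
  have hUU : star U * U = 1 := Matrix.mem_unitaryGroup_iff'.mp hU
  simp only [conjDiag, Matrix.mul_assoc]
  rw [← Matrix.mul_assoc (star U) U, hUU, Matrix.one_mul, ← Matrix.mul_assoc (Matrix.diagonal _),
    Matrix.diagonal_mul_diagonal]
  simp

lemma conjDiag_zero (U : Matrix m m ℂ) : conjDiag U 0 = 0 := by
  simp [conjDiag]

lemma conjDiag_one (hU : U ∈ Matrix.unitaryGroup m ℂ) : conjDiag U 1 = 1 := by
  simpa [conjDiag] using Matrix.mem_unitaryGroup_iff.mp hU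

lemma trace_conjDiag (hU : U ∈ Matrix.unitaryGroup m ℂ) (f : m → ℝ) :
    (conjDiag U f).trace = ∑ i, (f i : ℂ) := by
  rw [conjDiag, Matrix.trace_mul_cycle, Matrix.mem_unitaryGroup_iff'.mp hU, Matrix.one_mul,
    Matrix.trace_diagonal]

lemma aeval_conjDiag (hU : U ∈ Matrix.unitaryGroup m ℂ) (f : m → ℝ) (p : Polynomial ℝ) :
    Polynomial.aeval (conjDiag U f) p = conjDiag U (fun i => p.eval (f i)) := by
  have hconj := Polynomial.aeval_algHom_apply (Unitary.conjStarAlgAut ℝ (Matrix m m ℂ) ⟨U, hU⟩)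
    (Matrix.diagonal fun i => (f i : ℂ)) p
  have hdiag := Polynomial.aeval_algHom_apply (Matrix.diagonalAlgHom ℝ (n := m) (α := ℂ))
    (fun i => (f i : ℂ)) p
  simp only [Unitary.conjStarAlgAut_apply, Matrix.diagonalAlgHom_apply] at hconj hdiag
  rw [conjDiag, hconj, hdiag, Polynomial.aeval_pi_apply]
  congr 3 with i
  exact (Polynomial.ofReal_eval p (f i)).symm

-- Well-definedness of the functional calculus: on the finitely many eigenvalues, `φ` is a
-- polynomial.
lemma conjDiag_comp_of_eq {V : Matrix m m ℂ} (hU : U ∈ Matrix.unitaryGroup m ℂ)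
    (hV : V ∈ Matrix.unitaryGroup m ℂ) {f g : m → ℝ} (h : conjDiag U f = conjDiag V g)
    (φ : ℝ → ℝ) : conjDiag U (φ ∘ f) = conjDiag V (φ ∘ g) := by
  set s : Finset ℝ := Finset.univ.image f ∪ Finset.univ.image g
  have hp : ∀ t ∈ s, (Lagrange.interpolate s id φ).eval t = φ t := fun t ht =>
    Lagrange.eval_interpolate_at_node φ (Set.injOn_id _) ht
  have h' := congrArg (Polynomial.aeval · (Lagrange.interpolate s id φ)) h
  simp only [aeval_conjDiag hU, aeval_conjDiag hV] at h'
  convert h' using 2 <;> ext i <;> exact (hp _ (by simp [s])).symm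

end ConjDiag

section HermPow

variable {m : Type*} [Fintype m] [DecidableEq m] {A : Matrix m m ℂ}

lemma conjDiag_eigenvalues (hA : A.IsHermitian) :
    conjDiag (hA.eigenvectorUnitary : Matrix m m ℂ) hA.eigenvalues = A :=
  hA.spectral_theorem.symm

lemma hermPow_eq_conjDiag (hA : A.IsHermitian) (s : ℝ) :
    hermPow A s = conjDiag (hA.eigenvectorUnitary : Matrix m m ℂ) (fun i => hA.eigenvalues i ^ s) :=
  dif_pos hA

lemma hermPow_conjDiag {U : Matrix m m ℂ} (hU : U ∈ Matrix.unitaryGroup m ℂ) (f : m → ℝ)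
    (s : ℝ) : hermPow (conjDiag U f) s = conjDiag U (fun i => f i ^ s) := by
  have hA := conjDiag_isHermitian U f
  rw [hermPow_eq_conjDiag hA]
  exact conjDiag_comp_of_eq hA.eigenvectorUnitary.2 hU (conjDiag_eigenvalues hA) (· ^ s)

lemma trace_hermPow (hA : A.IsHermitian) (s : ℝ) :
    (hermPow A s).trace = ∑ i, ((hA.eigenvalues i ^ s : ℝ) : ℂ) := by
  rw [hermPow_eq_conjDiag hA, trace_conjDiag hA.eigenvectorUnitary.2]

end HermPow

section PiKronecker

variable {ι m : Type*} [Fintype ι]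

def piKronecker (M : ι → Matrix m m ℂ) : Matrix (ι → m) (ι → m) ℂ :=
  Matrix.of fun i j => ∏ k, M k (i k) (j k)

lemma piKronecker_mul [DecidableEq ι] [Fintype m] (M N : ι → Matrix m m ℂ) :
    piKronecker M * piKronecker N = piKronecker (M * N) := by
  ext i j
  simp only [piKronecker, Matrix.mul_apply, Matrix.of_apply, Pi.mul_apply, Finset.prod_univ_sum,
    Fintype.piFinset_univ, Finset.prod_mul_distrib]

lemma star_piKronecker (M : ι → Matrix m m ℂ) : star (piKronecker M) = piKronecker (star M) := by
  ext i j
  simp [piKronecker, Matrix.star_apply, star_prod]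

lemma piKronecker_diagonal [DecidableEq m] (v : ι → m → ℂ) :
    piKronecker (fun k => Matrix.diagonal (v k)) = Matrix.diagonal (fun i => ∏ k, v k (i k)) := by
  ext i j
  by_cases h : i = j
  · simp [piKronecker, h]
  · obtain ⟨k, hk⟩ := Function.ne_iff.mp h
    rw [Matrix.diagonal_apply_ne _ h]
    exact Finset.prod_eq_zero (Finset.mem_univ k) (Matrix.diagonal_apply_ne _ hk)

lemma trace_piKronecker [DecidableEq ι] [Fintype m] (M : ι → Matrix m m ℂ) :
    (piKronecker M).trace = ∏ k, (M k).trace := by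
  simp only [Matrix.trace, Matrix.diag, piKronecker, Matrix.of_apply, Finset.prod_univ_sum,
    Fintype.piFinset_univ]

variable [DecidableEq ι] [Fintype m] [DecidableEq m]

lemma piKronecker_mem_unitaryGroup {U : ι → Matrix m m ℂ}
    (hU : ∀ k, U k ∈ Matrix.unitaryGroup m ℂ) :
    piKronecker U ∈ Matrix.unitaryGroup (ι → m) ℂ := by
  have hone : star U * U = fun _ => Matrix.diagonal fun _ => 1 := by
    ext1 k
    simpa using Matrix.mem_unitaryGroup_iff'.mp (hU k)
  rw [Matrix.mem_unitaryGroup_iff', star_piKronecker, piKronecker_mul, hone,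
    piKronecker_diagonal]
  simp

lemma piKronecker_conjDiag (U : ι → Matrix m m ℂ) (f : ι → m → ℝ) :
    piKronecker (fun k => conjDiag (U k) (f k)) =
      conjDiag (piKronecker U) (fun i => ∏ k, f k (i k)) := by
  have hcast : (fun i : ι → m => ((∏ k, f k (i k) : ℝ) : ℂ)) = fun i => ∏ k, (f k (i k) : ℂ) := by
    push_cast
    rfl
  rw [conjDiag, hcast, ← piKronecker_diagonal (fun k i => (f k i : ℂ)), star_piKronecker,
    piKronecker_mul, piKronecker_mul]
  rfl

lemma hermPow_piKronecker {H : ι → Matrix m m ℂ} (hH : ∀ k, (H k).PosSemidef) (s : ℝ) :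
    hermPow (piKronecker H) s = piKronecker (fun k => hermPow (H k) s) := by
  have hU k := (hH k).1.eigenvectorUnitary.2
  have hdiag : piKronecker H = conjDiag (piKronecker fun k => ((hH k).1.eigenvectorUnitary :
      Matrix m m ℂ)) (fun i => ∏ k, (hH k).1.eigenvalues (i k)) := by
    rw [← piKronecker_conjDiag]
    simp only [conjDiag_eigenvalues]
  simp only [hdiag, hermPow_conjDiag (piKronecker_mem_unitaryGroup hU),
    hermPow_eq_conjDiag (hH _).1, piKronecker_conjDiag]
  congr with i
  exact (Real.finsetProd_rpow _ _ (fun k _ => (hH k).eigenvalues_nonneg _) s).symm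

end PiKronecker

section Schatten

variable {m : Type*} [Fintype m] [DecidableEq m]

lemma schattenNorm_eq_trace (p : ℝ) (A : Matrix m m ℂ) :
    schattenNorm p A = (hermPow (Aᴴ * A) (p / 2)).trace.re ^ (1 / p) := by
  rw [schattenNorm, trace_hermPow (Matrix.isHermitian_conjTranspose_mul_self A),
    ← Complex.ofReal_sum, Complex.ofReal_re]

lemma schattenNorm_piKronecker {ι : Type*} [Fintype ι] [DecidableEq ι] (p : ℝ)
    (M : ι → Matrix m m ℂ) : schattenNorm p (piKronecker M) = ∏ k, schattenNorm p (M k) := by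
  have hpsd k := Matrix.posSemidef_conjTranspose_mul_self (M k)
  have hnonneg k : 0 ≤ ∑ i, (hpsd k).1.eigenvalues i ^ (p / 2) :=
    Finset.sum_nonneg fun i _ => Real.rpow_nonneg ((hpsd k).eigenvalues_nonneg i) _
  have hstar : (piKronecker M)ᴴ * piKronecker M = piKronecker fun k => (M k)ᴴ * M k := by
    rw [← Matrix.star_eq_conjTranspose, star_piKronecker, piKronecker_mul]
    rfl
  simp only [schattenNorm_eq_trace, hstar, hermPow_piKronecker hpsd, trace_piKronecker,
    trace_hermPow (hpsd _).1, ← Complex.ofReal_sum, ← Complex.ofReal_prod, Complex.ofReal_re]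
  exact (Real.finsetProd_rpow _ _ (fun k _ => hnonneg k) _).symm

lemma schattenNorm_of_posSemidef {M : Matrix m m ℂ} (hM : M.PosSemidef) (p : ℝ) :
    schattenNorm p M = (∑ i, hM.1.eigenvalues i ^ p) ^ (1 / p) := by
  have hU := hM.1.eigenvectorUnitary.2
  have hsq : Mᴴ * M = conjDiag hM.1.eigenvectorUnitary (hM.1.eigenvalues * hM.1.eigenvalues) := by
    rw [hM.1.eq, ← conjDiag_mul hU, conjDiag_eigenvalues]
  rw [schattenNorm_eq_trace, hsq, hermPow_conjDiag hU, trace_conjDiag hU, ← Complex.ofReal_sum,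
    Complex.ofReal_re]
  congr 2 with i
  rw [Pi.mul_apply, ← sq, ← Real.rpow_two, ← Real.rpow_mul (hM.eigenvalues_nonneg i)]
  ring_nf

lemma inv_card_le_schattenNorm {M : Matrix m m ℂ} (hM : M.PosSemidef) (htr : 1 ≤ M.trace.re)
    {p : ℝ} (hp : 0 < p) : (Fintype.card m : ℝ)⁻¹ ≤ schattenNorm p M := by
  have htr' : 1 ≤ ∑ i, hM.1.eigenvalues i := by
    simpa [hM.1.trace_eq_sum_eigenvalues] using htr
  have hne : (Finset.univ : Finset m).Nonempty :=
    Finset.nonempty_of_sum_ne_zero (f := hM.1.eigenvalues) (by linarith)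
  have hsum : ∑ _i : m, (Fintype.card m : ℝ)⁻¹ ≤ ∑ i, hM.1.eigenvalues i := by
    rwa [Finset.sum_const, Finset.card_univ, nsmul_eq_mul,
      mul_inv_cancel₀ (by simpa [Finset.card_univ] using hne.card_ne_zero)]
  obtain ⟨i, -, hi⟩ := Finset.exists_le_of_sum_le hne hsum
  have hnonneg j := Real.rpow_nonneg (hM.eigenvalues_nonneg j) p
  calc (Fintype.card m : ℝ)⁻¹ = ((Fintype.card m : ℝ)⁻¹ ^ p) ^ p⁻¹ :=
        (Real.rpow_rpow_inv (by positivity) hp.ne').symm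
    _ ≤ (hM.1.eigenvalues i ^ p) ^ p⁻¹ := by gcongr
    _ ≤ (∑ j, hM.1.eigenvalues j ^ p) ^ p⁻¹ :=
        Real.rpow_le_rpow (hnonneg i) (Finset.single_le_sum (fun j _ => hnonneg j)
          (Finset.mem_univ i)) (by positivity)
    _ = schattenNorm p M := by rw [schattenNorm_of_posSemidef hM, one_div]

end Schatten

section Sandwich

variable {m : Type*} [Fintype m] [DecidableEq m] {σ W : Matrix m m ℂ}

open scoped MatrixOrder in
lemma re_trace_mul_nonneg {A B : Matrix m m ℂ} (hA : A.PosSemidef) (hB : B.PosSemidef) :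
    0 ≤ (A * B).trace.re := by
  obtain ⟨C, rfl⟩ := CStarAlgebra.nonneg_iff_eq_star_mul_self.mp hB.nonneg
  rw [← Matrix.mul_assoc, Matrix.trace_mul_cycle, Matrix.star_eq_conjTranspose]
  exact (Complex.nonneg_iff.mp (hA.mul_mul_conjTranspose_same C).trace_nonneg).1

lemma mul_eq_zero_of_ker_le (hsupp : ∀ v, σ *ᵥ v = 0 → W *ᵥ v = 0) {X : Matrix m m ℂ}
    (hX : σ * X = 0) : W * X = 0 := by
  refine Matrix.ext_of_mulVec_single fun i => ?_
  rw [← Matrix.mulVec_mulVec, hsupp _ (by rw [Matrix.mulVec_mulVec, hX, Matrix.zero_mulVec]),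
    Matrix.zero_mulVec]

lemma posSemidef_sandwich (hσ : σ.IsHermitian) (hW : W.PosSemidef) (r : ℝ) :
    (hermPow σ r * W * hermPow σ r).PosSemidef := by
  have hσr : (hermPow σ r)ᴴ = hermPow σ r := by
    rw [hermPow_eq_conjDiag hσ]
    exact conjDiag_isHermitian _ _
  simpa [hσr] using hW.conjTranspose_mul_mul_same (hermPow σ r)

-- The eigenvalues of a state are at most `1`, so for `r ≤ 0` the matrix `σ ^ r σ ^ r` dominates
-- the projection onto `supp σ`, on which `W` lives.
lemma one_le_re_trace_sandwich (hσ : σ.PosSemidef) (hσtr : σ.trace = 1) (hW : W.PosSemidef)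
    (hWtr : W.trace = 1) (hsupp : ∀ v, σ *ᵥ v = 0 → W *ᵥ v = 0) {r : ℝ} (hr : r ≤ 0) :
    1 ≤ (hermPow σ r * W * hermPow σ r).trace.re := by
  set U : Matrix m m ℂ := (hσ.1.eigenvectorUnitary : Matrix m m ℂ)
  set ev := hσ.1.eigenvalues
  have hU : U ∈ Matrix.unitaryGroup m ℂ := hσ.1.eigenvectorUnitary.2
  have hev_le_one i : ev i ≤ 1 := by
    have hsum : ∑ j, ev j = 1 := by
      simpa [hσ.1.trace_eq_sum_eigenvalues] using congrArg Complex.re hσtr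
    exact hsum ▸ Finset.single_le_sum (fun j _ => hσ.eigenvalues_nonneg j) (Finset.mem_univ i)
  set supp : m → ℝ := fun i => if ev i = 0 then 0 else 1
  have hσsupp : σ * (1 - conjDiag U supp) = 0 := by
    rw [← conjDiag_one hU, conjDiag_sub, ← conjDiag_eigenvalues hσ.1, conjDiag_mul hU]
    convert conjDiag_zero U
    ext i
    by_cases h : ev i = 0 <;> simp [supp, ev, h]
  have hWsupp : W * conjDiag U supp = W := by
    have := mul_eq_zero_of_ker_le hsupp hσsupp
    rw [Matrix.mul_sub, Matrix.mul_one, sub_eq_zero] at this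
    exact this.symm
  have hsplit : hermPow σ r * hermPow σ r =
      conjDiag U supp + conjDiag U (fun i => ev i ^ r * ev i ^ r - supp i) := by
    rw [hermPow_eq_conjDiag hσ.1, conjDiag_mul hU, conjDiag_add]
    congr with i
    simp only [Pi.mul_apply, Pi.add_apply]
    ring
  have hrest : (conjDiag U (fun i => ev i ^ r * ev i ^ r - supp i)).PosSemidef := by
    refine conjDiag_posSemidef U fun i => ?_
    by_cases h : ev i = 0
    · simpa [supp, h] using mul_self_nonneg ((0 : ℝ) ^ r)
    · have hpos : 0 < ev i := (hσ.eigenvalues_nonneg i).lt_of_ne' h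
      have := Real.one_le_rpow_of_pos_of_le_one_of_nonpos hpos (hev_le_one i) hr
      simp only [supp, h, if_false, Pi.zero_apply, sub_nonneg]
      nlinarith
  have htrace : (hermPow σ r * W * hermPow σ r).trace =
      (W * (hermPow σ r * hermPow σ r)).trace := by
    rw [Matrix.trace_mul_cycle, Matrix.trace_mul_comm]
  rw [htrace, hsplit, Matrix.mul_add, Matrix.trace_add, hWsupp, Complex.add_re, hWtr,
    Complex.one_re]
  linarith [re_trace_mul_nonneg hW hrest]

lemma inv_card_le_schattenNorm_sandwich (hσ : σ.PosSemidef) (hσtr : σ.trace = 1)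
    (hW : W.PosSemidef) (hWtr : W.trace = 1) (hsupp : ∀ v, σ *ᵥ v = 0 → W *ᵥ v = 0) {r : ℝ}
    (hr : r ≤ 0) {p : ℝ} (hp : 0 < p) :
    (Fintype.card m : ℝ)⁻¹ ≤ schattenNorm p (hermPow σ r * W * hermPow σ r) :=
  inv_card_le_schattenNorm (posSemidef_sandwich hσ.1 hW r)
    (one_le_re_trace_sandwich hσ hσtr hW hWtr hsupp hr) hp

end Sandwich

section States

variable {m : Type*} [Fintype m]

lemma card_pos_of_trace_eq_one {σ : Matrix m m ℂ} (hσtr : σ.trace = 1) : 0 < Fintype.card m := by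
  refine Fintype.card_pos_iff.mpr (not_isEmpty_iff.mp fun h => ?_)
  simp [Matrix.trace, Finset.univ_eq_empty] at hσtr

variable [DecidableEq m]

lemma exists_faithful_state [Nonempty m] :
    ∃ σ : Matrix m m ℂ, σ.PosSemidef ∧ σ.trace = 1 ∧ ∀ v, σ *ᵥ v = 0 → v = 0 := by
  have hcard : (Fintype.card m : ℂ) ≠ 0 := by simp
  refine ⟨(Fintype.card m : ℂ)⁻¹ • 1, Matrix.PosSemidef.one.smul (by positivity), ?_, ?_⟩
  · simp [Matrix.trace_smul, hcard]
  · intro v hv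
    simpa [Matrix.smul_mulVec, hcard] using hv

lemma log_inv_card_le_sandwichedRenyi {σ W : Matrix m m ℂ} (hσ : σ.PosSemidef)
    (hσtr : σ.trace = 1) (hW : W.PosSemidef) (hWtr : W.trace = 1)
    (hsupp : ∀ v, σ *ᵥ v = 0 → W *ᵥ v = 0) {α : ℝ} (hα : 1 < α) :
    α / (α - 1) * Real.log (Fintype.card m : ℝ)⁻¹ ≤ sandwichedRenyi α W σ := by
  have hr : (1 - α) / (2 * α) ≤ 0 := div_nonpos_of_nonpos_of_nonneg (by linarith) (by linarith)
  have hcard : (0 : ℝ) < Fintype.card m := by exact_mod_cast card_pos_of_trace_eq_one hσtr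
  exact mul_le_mul_of_nonneg_left (Real.log_le_log (by positivity)
    (inv_card_le_schattenNorm_sandwich hσ hσtr hW hWtr hsupp hr (by linarith)))
    (div_nonneg (by linarith) (by linarith))

end States

section TypeClass

variable {X : Type*} [Fintype X] [DecidableEq X] {n : ℕ}

lemma empDist_nonneg (x : Fin n → X) (a : X) : 0 ≤ empDist x a := by
  unfold empDist
  positivity

lemma card_filter_eq_mul_empDist_s15 (x : Fin n → X) (a : X) :
    ((Finset.univ.filter fun k => x k = a).card : ℝ) = n * empDist x a := by
  rcases Nat.eq_zero_or_pos n with rfl | hn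
  · simp
  · rw [empDist]
    field_simp

lemma prod_comp_eq_exp_mul_sum_empDist (x : Fin n → X) {f : X → ℝ}
    (hf : ∀ a, 0 < empDist x a → 0 < f a) :
    ∏ k, f (x k) = Real.exp (n * ∑ a, empDist x a * Real.log (f a)) := by
  rw [← Finset.prod_fiberwise Finset.univ x, Finset.mul_sum, Real.exp_sum]
  refine Finset.prod_congr rfl fun a _ => ?_
  rw [Finset.prod_congr rfl fun k hk => by rw [(Finset.mem_filter.mp hk).2], Finset.prod_const,
    ← mul_assoc, ← card_filter_eq_mul_empDist_s15, Real.exp_nat_mul]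
  rcases (empDist_nonneg x a).eq_or_lt with h | h
  · have hcard : (Finset.univ.filter fun k => x k = a).card = 0 := by
      exact_mod_cast (card_filter_eq_mul_empDist_s15 x a).trans (by rw [← h, mul_zero] : _ = (0 : ℝ))
    simp [hcard]
  · rw [Real.exp_log (hf a h)]

end TypeClass

section TensorPower

variable {X : Type*} {n d : ℕ}

lemma schattenNorm_sandwich_tensPow {σ : Matrix (Fin d) (Fin d) ℂ}
    (hσ : σ.PosSemidef) (W : X → Matrix (Fin d) (Fin d) ℂ) (x : Fin n → X) (p r : ℝ) :
    schattenNorm p (hermPow (tensPow n σ) r * cqPow W x * hermPow (tensPow n σ) r) =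
      ∏ k, schattenNorm p (hermPow σ r * W (x k) * hermPow σ r) := by
  rw [show tensPow n σ = piKronecker fun _ => σ from rfl,
    show cqPow W x = piKronecker fun k => W (x k) from rfl, hermPow_piKronecker fun _ => hσ,
    piKronecker_mul, piKronecker_mul, schattenNorm_piKronecker]
  rfl

lemma schattenNorm_sandwich_tensPow_eq_exp [Fintype X] [DecidableEq X]
    {σ : Matrix (Fin d) (Fin d) ℂ} (hσ : σ.PosSemidef) (hσtr : σ.trace = 1)
    {W : X → Matrix (Fin d) (Fin d) ℂ} (hWpsd : ∀ a, (W a).PosSemidef)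
    (hWtr : ∀ a, (W a).trace = 1) (x : Fin n → X)
    (hsupp : ∀ a, 0 < empDist x a → ∀ v, σ *ᵥ v = 0 → W a *ᵥ v = 0) {α : ℝ} (hα : 1 < α) :
    schattenNorm α (hermPow (tensPow n σ) ((1 - α) / (2 * α)) * cqPow W x *
        hermPow (tensPow n σ) ((1 - α) / (2 * α))) =
      Real.exp ((α - 1) / α * n * ∑ a, empDist x a * sandwichedRenyi α (W a) σ) := by
  have hr : (1 - α) / (2 * α) ≤ 0 := div_nonpos_of_nonpos_of_nonneg (by linarith) (by linarith)
  have hinv : (0 : ℝ) < (Fintype.card (Fin d) : ℝ)⁻¹ := by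
    have := card_pos_of_trace_eq_one hσtr
    positivity
  rw [schattenNorm_sandwich_tensPow hσ, prod_comp_eq_exp_mul_sum_empDist x fun a ha =>
    hinv.trans_le (inv_card_le_schattenNorm_sandwich hσ hσtr (hWpsd a) (hWtr a) (hsupp a ha) hr
      (by linarith))]
  congr 1
  simp only [sandwichedRenyi, Finset.mul_sum]
  refine Finset.sum_congr rfl fun a _ => ?_
  field_simp [show α - 1 ≠ 0 by linarith]

end TensorPower

section AdmissibleState

variable {X : Type*} {d : ℕ}

abbrev AdmissibleState (P : X → ℝ) (W : X → Matrix (Fin d) (Fin d) ℂ) : Type :=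
  {σ : Matrix (Fin d) (Fin d) ℂ // σ.PosSemidef ∧ σ.trace = 1 ∧
    ∀ x : X, 0 < P x → ∀ v : Fin d → ℂ, σ.mulVec v = 0 → (W x).mulVec v = 0}

lemma nonempty_admissibleState (hd : 0 < d) (P : X → ℝ) (W : X → Matrix (Fin d) (Fin d) ℂ) :
    Nonempty (AdmissibleState P W) :=
  have : Nonempty (Fin d) := Fin.pos_iff_nonempty.mp hd
  have ⟨σ, hσ, hσtr, hfaithful⟩ := exists_faithful_state (m := Fin d)
  ⟨σ, hσ, hσtr, fun _ _ v hv => by rw [hfaithful v hv, Matrix.mulVec_zero]⟩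

lemma augustin_eq_iInf_admissibleState [Fintype X] (α : ℝ) {P : X → ℝ} (hP : ∀ x, 0 ≤ P x)
    (W : X → Matrix (Fin d) (Fin d) ℂ) :
    augustin α P W = ⨅ σ : AdmissibleState P W, ∑ x, P x * sandwichedRenyi α (W x) σ.1 :=
  have hpos x : 0 < P x ↔ P x ≠ 0 := (hP x).lt_iff_ne'
  Equiv.iInf_congr (Equiv.subtypeEquivRight fun σ => by simp only [hpos]) fun _ => rfl

lemma bddBelow_range_sum_mul_sandwichedRenyi [Fintype X] {P : X → ℝ} (hP : ∀ x, 0 ≤ P x)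
    {W : X → Matrix (Fin d) (Fin d) ℂ} (hWpsd : ∀ x, (W x).PosSemidef)
    (hWtr : ∀ x, (W x).trace = 1) {α : ℝ} (hα : 1 < α) :
    BddBelow (Set.range fun σ : AdmissibleState P W =>
      ∑ x, P x * sandwichedRenyi α (W x) σ.1) := by
  refine ⟨∑ x, P x * (α / (α - 1) * Real.log (Fintype.card (Fin d) : ℝ)⁻¹), ?_⟩
  rintro _ ⟨σ, rfl⟩
  refine Finset.sum_le_sum fun x _ => ?_
  rcases (hP x).eq_or_lt with h | h
  · simp [← h]
  · exact mul_le_mul_of_nonneg_left (log_inv_card_le_sandwichedRenyi σ.2.1 σ.2.2.1 (hWpsd x)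
      (hWtr x) (σ.2.2.2 x h) hα) h.le

end AdmissibleState

lemma exp_mul_ciInf {ι : Sort*} [Nonempty ι] {g : ι → ℝ} (hg : BddBelow (Set.range g)) {c : ℝ}
    (hc : 0 ≤ c) : Real.exp (c * ⨅ i, g i) = ⨅ i, Real.exp (c * g i) :=
  Monotone.map_ciInf_of_continuousAt (f := fun t => Real.exp (c * t)) (by fun_prop)
    (fun _ _ h => Real.exp_le_exp.mpr (mul_le_mul_of_nonneg_left h hc)) hg

theorem augustin_identity_constant_composition_general
    {X : Type*} [Fintype X] [DecidableEq X] {n d : ℕ} (hd : 1 ≤ d)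
    (P : X → ℝ)
    (xP : Fin n → X) (hxP : xP ∈ typeClass n P)
    (W : X → Matrix (Fin d) (Fin d) ℂ)
    (hWpsd : ∀ x, (W x).PosSemidef) (hWtr : ∀ x, (W x).trace = 1)
    (α : ℝ) (hα₁ : 1 < α) :
    (⨅ σ : {σ : Matrix (Fin d) (Fin d) ℂ // σ.PosSemidef ∧ σ.trace = 1 ∧
        ∀ x : X, 0 < P x → ∀ v : Fin d → ℂ, σ.mulVec v = 0 → (W x).mulVec v = 0},
      schattenNorm α (hermPow (tensPow n σ.1) ((1 - α) / (2 * α)) * cqPow W xP *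
        hermPow (tensPow n σ.1) ((1 - α) / (2 * α)))) =
      Real.exp (((α - 1) / α) * n * augustin α P W) := by
  obtain rfl : empDist xP = P := (Finset.mem_filter.mp hxP).2
  have := nonempty_admissibleState hd (empDist xP) W
  rw [augustin_eq_iInf_admissibleState α (empDist_nonneg xP) W,
    exp_mul_ciInf (bddBelow_range_sum_mul_sandwichedRenyi (empDist_nonneg xP) hWpsd hWtr hα₁)
      (by positivity)]
  exact iInf_congr fun σ =>
    schattenNorm_sandwich_tensPow_eq_exp σ.2.1 σ.2.2.1 hWpsd hWtr xP σ.2.2.2 hα₁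

/-- Augustin-information identity for constant-composition inputs. -/
theorem augustin_identity_constant_composition
    {X : Type*} [Fintype X] [DecidableEq X] [LinearOrder X] {n d : ℕ} (hd : 1 ≤ d)
    (P : X → ℝ) (hP : IsType n P)
    (xP : Fin n → X) (hxP : xP ∈ typeClass n P) (hmono : Monotone xP)
    (W : X → Matrix (Fin d) (Fin d) ℂ)
    (hWpsd : ∀ x, (W x).PosSemidef) (hWtr : ∀ x, (W x).trace = 1)
    (α : ℝ) (hα₁ : 1 < α) (hα₂ : α ≤ 2) :
    (⨅ σ : {σ : Matrix (Fin d) (Fin d) ℂ // σ.PosSemidef ∧ σ.trace = 1 ∧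
        ∀ x : X, 0 < P x → ∀ v : Fin d → ℂ, σ.mulVec v = 0 → (W x).mulVec v = 0},
      schattenNorm α (hermPow (tensPow n σ.1) ((1 - α) / (2 * α)) * cqPow W xP *
        hermPow (tensPow n σ.1) ((1 - α) / (2 * α)))) =
      Real.exp (((α - 1) / α) * n * augustin α P W) :=
  augustin_identity_constant_composition_general hd P xP hxP W hWpsd hWtr α hα₁

end Paper
end
end
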